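/- arXiv:2510.07937 — 2 statements merged into one kernel-verified Lean document; each statement's English description precedes it below -/
import Mathlib

section
/- There exists a constant C, depending only on T, α, M, E, K, such that every smooth positive solution of the cross-diffusion system on [0,T] with potentials V, W ∈ C³(𝕋) and data bounds (M, E, B, K) satisfies ∫₀^T ∫_𝕋 |∂_x(S(t,x)^{α/2})|² dx dt ≤ C and ∫₀^T (sup_{x∈𝕋} S(t,x)^{α/2})² dt ≤ C, where S = ρ + μ. -/
open MeasureTheory Real Set Filter

noncomputable section

/-- Partial derivative with respect to the time variable (first argument). -/
def pt (f : ℝ → ℝ → ℝ) (t x : ℝ) : ℝ := deriv (fun s => f s x) t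

/-- Partial derivative with respect to the space variable (second argument). -/
def px (f : ℝ → ℝ → ℝ) (t x : ℝ) : ℝ := deriv (fun y => f t y) x

/-- A smooth positive solution of the cross-diffusion system
`∂ₜρ = ∂ₓ(ρ·αS^(α-2)∂ₓS) + ∂ₓ(ρ∂ₓV)`, `∂ₜμ = ∂ₓ(μ·αS^(α-2)∂ₓS) + ∂ₓ(μ∂ₓW)` (S = ρ+μ)
on [0,T]×𝕋, where the torus 𝕋 = ℝ/ℤ is modeled by 1-periodic functions on ℝ. -/
structure CrossDiffSol (T α : ℝ) (V W : ℝ → ℝ) (ρ μ : ℝ → ℝ → ℝ) : Prop where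
  smooth_rho : ContDiff ℝ (⊤ : ℕ∞) (Function.uncurry ρ)
  smooth_mu : ContDiff ℝ (⊤ : ℕ∞) (Function.uncurry μ)
  periodic_rho : ∀ t, Function.Periodic (ρ t) 1
  periodic_mu : ∀ t, Function.Periodic (μ t) 1
  pos_rho : ∀ t x, 0 < ρ t x
  pos_mu : ∀ t x, 0 < μ t x
  smooth_V : ContDiff ℝ 3 V
  smooth_W : ContDiff ℝ 3 W
  periodic_V : Function.Periodic V 1
  periodic_W : Function.Periodic W 1
  eq_rho : ∀ t ∈ Set.Icc (0:ℝ) T, ∀ x : ℝ,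
    pt ρ t x =
      px (fun s y => ρ s y * (α * (ρ s y + μ s y) ^ (α - 2) *
        px (fun s' y' => ρ s' y' + μ s' y') s y)) t x
      + px (fun s y => ρ s y * deriv V y) t x
  eq_mu : ∀ t ∈ Set.Icc (0:ℝ) T, ∀ x : ℝ,
    pt μ t x =
      px (fun s y => μ s y * (α * (ρ s y + μ s y) ^ (α - 2) *
        px (fun s' y' => ρ s' y' + μ s' y') s y)) t x
      + px (fun s y => μ s y * deriv W y) t x

/-- Data bounds (M, E, B, K): mass of the initial total density at most `M`, initial entropy at
most `E`, initial BV bound `B` on `log(ρ₀/μ₀)`, and `C³` norms of the potentials at most `K`. -/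
structure DataBounds (V W : ℝ → ℝ) (ρ μ : ℝ → ℝ → ℝ) (M E B K : ℝ) : Prop where
  mass : (∫ x in (0:ℝ)..1, (ρ 0 x + μ 0 x)) ≤ M
  entropy : (∫ x in (0:ℝ)..1,
      (ρ 0 x * |Real.log (ρ 0 x)| + μ 0 x * |Real.log (μ 0 x)|)) ≤ E
  bv : (∫ x in (0:ℝ)..1, |deriv (fun y => Real.log (ρ 0 y / μ 0 y)) x|) ≤ B
  normV : ∀ x : ℝ, |V x| ≤ K ∧ |deriv V x| ≤ K ∧ |deriv (deriv V) x| ≤ K ∧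
    |deriv (deriv (deriv V)) x| ≤ K
  normW : ∀ x : ℝ, |W x| ≤ K ∧ |deriv W x| ≤ K ∧ |deriv (deriv W) x| ≤ K ∧
    |deriv (deriv (deriv W)) x| ≤ K

open Function intervalIntegral

namespace CD

variable {f : ℝ → ℝ → ℝ}

lemma hasDerivAt_fst (hf : ContDiff ℝ (⊤ : ℕ∞) (uncurry f)) (t x : ℝ) :
    HasDerivAt (fun s => f s x) (fderiv ℝ (uncurry f) (t, x) (1, 0)) t := by
  have h1 : HasFDerivAt (uncurry f) (fderiv ℝ (uncurry f) (t, x)) (t, x) :=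
    (hf.differentiable (by simp)).differentiableAt.hasFDerivAt
  exact h1.comp_hasDerivAt t ((hasDerivAt_id t).prodMk (hasDerivAt_const t x))

lemma hasDerivAt_snd (hf : ContDiff ℝ (⊤ : ℕ∞) (uncurry f)) (t x : ℝ) :
    HasDerivAt (fun y => f t y) (fderiv ℝ (uncurry f) (t, x) (0, 1)) x := by
  have h1 : HasFDerivAt (uncurry f) (fderiv ℝ (uncurry f) (t, x)) (t, x) :=
    (hf.differentiable (by simp)).differentiableAt.hasFDerivAt
  exact h1.comp_hasDerivAt x ((hasDerivAt_const x t).prodMk (hasDerivAt_id x))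

lemma pt_eq (hf : ContDiff ℝ (⊤ : ℕ∞) (uncurry f)) (t x : ℝ) :
    pt f t x = fderiv ℝ (uncurry f) (t, x) (1, 0) := (hasDerivAt_fst hf t x).deriv

lemma px_eq (hf : ContDiff ℝ (⊤ : ℕ∞) (uncurry f)) (t x : ℝ) :
    px f t x = fderiv ℝ (uncurry f) (t, x) (0, 1) := (hasDerivAt_snd hf t x).deriv

lemma hasDerivAt_pt (hf : ContDiff ℝ (⊤ : ℕ∞) (uncurry f)) (t x : ℝ) :
    HasDerivAt (fun s => f s x) (pt f t x) t := by
  rw [pt_eq hf]; exact hasDerivAt_fst hf t x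

lemma hasDerivAt_px (hf : ContDiff ℝ (⊤ : ℕ∞) (uncurry f)) (t x : ℝ) :
    HasDerivAt (fun y => f t y) (px f t x) x := by
  rw [px_eq hf]; exact hasDerivAt_snd hf t x

lemma contDiff_px (hf : ContDiff ℝ (⊤ : ℕ∞) (uncurry f)) :
    ContDiff ℝ (⊤ : ℕ∞) (fun p : ℝ × ℝ => px f p.1 p.2) := by
  have h1 : ContDiff ℝ (⊤ : ℕ∞) (fun p : ℝ × ℝ => fderiv ℝ (uncurry f) p (0, 1)) :=
    (hf.fderiv_right (by simp)).clm_apply contDiff_const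
  have h2 : (fun p : ℝ × ℝ => px f p.1 p.2) = fun p => fderiv ℝ (uncurry f) p (0, 1) :=
    funext fun p => px_eq hf p.1 p.2
  rw [h2]; exact h1

lemma continuous_px (hf : ContDiff ℝ (⊤ : ℕ∞) (uncurry f)) :
    Continuous (fun p : ℝ × ℝ => px f p.1 p.2) := (contDiff_px hf).continuous

lemma continuous_pt (hf : ContDiff ℝ (⊤ : ℕ∞) (uncurry f)) :
    Continuous (fun p : ℝ × ℝ => pt f p.1 p.2) := by
  have h1 : ContDiff ℝ (⊤ : ℕ∞) (fun p : ℝ × ℝ => fderiv ℝ (uncurry f) p (1, 0)) :=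
    (hf.fderiv_right (by simp)).clm_apply contDiff_const
  have h2 : (fun p : ℝ × ℝ => pt f p.1 p.2) = fun p => fderiv ℝ (uncurry f) p (1, 0) :=
    funext fun p => pt_eq hf p.1 p.2
  rw [h2]; exact h1.continuous

/-- The derivative of a 1-periodic function is 1-periodic. -/
lemma periodic_deriv' {g : ℝ → ℝ} (hper : Periodic g 1) : Periodic (deriv g) 1 := by
  intro x
  have h1 : (fun y => g (y + 1)) = g := funext fun y => hper y
  rw [← deriv_comp_add_const g 1 x, h1]

lemma periodic_px (hper : ∀ t, Periodic (f t) 1) (t : ℝ) :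
    Periodic (px f t) 1 := periodic_deriv' (hper t)

/-- Differentiation under the interval integral for jointly continuous data. -/
lemma hasDerivAt_integral {G G' : ℝ → ℝ → ℝ} (hG : Continuous (uncurry G))
    (hG' : Continuous (uncurry G'))
    (hd : ∀ t x, HasDerivAt (fun s => G s x) (G' t x) t) (t₀ : ℝ) :
    HasDerivAt (fun t => ∫ x in (0:ℝ)..1, G t x) (∫ x in (0:ℝ)..1, G' t₀ x) t₀ := by
  have hcpt : IsCompact (Icc (t₀ - 1) (t₀ + 1) ×ˢ Icc (0:ℝ) 1) :=
    isCompact_Icc.prod isCompact_Icc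
  obtain ⟨C, hC⟩ := hcpt.exists_bound_of_continuousOn hG'.continuousOn
  have key := hasDerivAt_integral_of_dominated_loc_of_deriv_le (F := G) (F' := G')
    (x₀ := t₀) (a := 0) (b := 1) (bound := fun _ => C) (μ := volume) (Metric.ball_mem_nhds t₀ one_pos)
    ?_ ?_ ?_ ?_ ?_ ?_
  · exact key.2
  · filter_upwards with t
    exact (hG.comp (Continuous.prodMk_right t)).aestronglyMeasurable
  · exact ((hG.comp (Continuous.prodMk_right t₀)).intervalIntegrable 0 1)
  · exact (hG'.comp (Continuous.prodMk_right t₀)).aestronglyMeasurable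
  · filter_upwards with x hx t ht
    have : (t, x) ∈ Icc (t₀ - 1) (t₀ + 1) ×ˢ Icc (0:ℝ) 1 := by
      constructor
      · have := Metric.mem_ball.mp ht
        rw [Real.dist_eq] at this
        constructor <;> [linarith [abs_lt.mp this]; linarith [(abs_lt.mp this).2]]
      · rw [Set.uIoc_of_le (by norm_num : (0:ℝ) ≤ 1)] at hx
        exact ⟨le_of_lt hx.1, hx.2⟩
    exact hC (t, x) this
  · exact intervalIntegrable_const
  · filter_upwards with x hx t ht
    exact hd t x

/-- Integration by parts on the circle: the boundary term vanishes. -/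
lemma ibp_periodic {u v u' v' : ℝ → ℝ} (hu : ∀ x, HasDerivAt u (u' x) x)
    (hv : ∀ x, HasDerivAt v (v' x) x) (hu' : Continuous u') (hv' : Continuous v')
    (hup : Periodic u 1) (hvp : Periodic v 1) :
    ∫ x in (0:ℝ)..1, u' x * v x = - ∫ x in (0:ℝ)..1, u x * v' x := by
  have hu'i : IntervalIntegrable u' volume 0 1 := hu'.intervalIntegrable 0 1
  have hv'i : IntervalIntegrable v' volume 0 1 := hv'.intervalIntegrable 0 1
  have key := integral_deriv_mul_eq_sub (fun x _ => hu x) (fun x _ => hv x) hu'i hv'i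
  have hbd : u 1 * v 1 - u 0 * v 0 = 0 := by
    have h1 : u 1 = u 0 := by simpa using hup 0
    have h2 : v 1 = v 0 := by simpa using hvp 0
    rw [h1, h2]; ring
  rw [hbd] at key
  have hucont : Continuous u := by
    have : Differentiable ℝ u := fun x => (hu x).differentiableAt
    exact this.continuous
  have hvcont : Continuous v := by
    have : Differentiable ℝ v := fun x => (hv x).differentiableAt
    exact this.continuous
  have hsplit : (∫ x in (0:ℝ)..1, (u' x * v x + u x * v' x)) =
      (∫ x in (0:ℝ)..1, u' x * v x) + ∫ x in (0:ℝ)..1, u x * v' x :=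
    integral_add ((hu'.mul hvcont).intervalIntegrable 0 1)
      ((hucont.mul hv').intervalIntegrable 0 1)
  rw [hsplit] at key
  linarith

end CD

namespace CD

section Sol

variable {T α : ℝ} {V W : ℝ → ℝ} {ρ μ : ℝ → ℝ → ℝ}

/-- Total density. -/
def Sfn (ρ μ : ℝ → ℝ → ℝ) : ℝ → ℝ → ℝ := fun t x => ρ t x + μ t x

/-- Common drift velocity. -/
def Afn (α : ℝ) (ρ μ : ℝ → ℝ → ℝ) : ℝ → ℝ → ℝ :=
  fun t x => α * (Sfn ρ μ t x) ^ (α - 2) * px (Sfn ρ μ) t x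

lemma smooth_S (h : CrossDiffSol T α V W ρ μ) : ContDiff ℝ (⊤ : ℕ∞) (uncurry (Sfn ρ μ)) :=
  h.smooth_rho.add h.smooth_mu

lemma pos_S (h : CrossDiffSol T α V W ρ μ) (t x : ℝ) : 0 < Sfn ρ μ t x :=
  add_pos (h.pos_rho t x) (h.pos_mu t x)

lemma periodic_S (h : CrossDiffSol T α V W ρ μ) (t : ℝ) : Periodic (Sfn ρ μ t) 1 :=
  fun x => by simp only [Sfn, h.periodic_rho t x, h.periodic_mu t x]

lemma smooth_A (h : CrossDiffSol T α V W ρ μ) :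
    ContDiff ℝ (⊤ : ℕ∞) (fun p : ℝ × ℝ => Afn α ρ μ p.1 p.2) := by
  apply contDiff_iff_contDiffAt.mpr
  intro p
  have h1 : ContDiffAt ℝ (⊤ : ℕ∞) (fun q : ℝ × ℝ => (Sfn ρ μ q.1 q.2) ^ (α - 2)) p :=
    ((smooth_S h).contDiffAt (x := p)).rpow_const_of_ne (ne_of_gt (pos_S h p.1 p.2))
  exact (contDiffAt_const.mul h1).mul ((contDiff_px (smooth_S h)).contDiffAt)

lemma periodic_A (h : CrossDiffSol T α V W ρ μ) (t : ℝ) : Periodic (Afn α ρ μ t) 1 := by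
  intro x
  simp only [Afn, periodic_S h t x, periodic_px (periodic_S h) t x]

/-- Restriction of a jointly smooth function to fixed time is smooth. -/
lemma fix_t {F : ℝ × ℝ → ℝ} (hF : ContDiff ℝ (⊤ : ℕ∞) F) (t : ℝ) :
    ContDiff ℝ (⊤ : ℕ∞) (fun x : ℝ => F (t, x)) :=
  hF.comp (contDiff_const.prodMk contDiff_id)

/-- From `C¹`, get `HasDerivAt` with `deriv`. -/
lemma hda_of_contDiff {g : ℝ → ℝ} (hg : ContDiff ℝ 1 g) (x : ℝ) :
    HasDerivAt g (deriv g x) x := (hg.differentiable (by norm_num) x).hasDerivAt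

lemma smooth_flux1_rho (h : CrossDiffSol T α V W ρ μ) (t : ℝ) :
    ContDiff ℝ (⊤ : ℕ∞) (fun y => ρ t y * Afn α ρ μ t y) :=
  (fix_t h.smooth_rho t).mul (fix_t (smooth_A h) t)

lemma smooth_flux1_mu (h : CrossDiffSol T α V W ρ μ) (t : ℝ) :
    ContDiff ℝ (⊤ : ℕ∞) (fun y => μ t y * Afn α ρ μ t y) :=
  (fix_t h.smooth_mu t).mul (fix_t (smooth_A h) t)

lemma derivV_contDiff {V : ℝ → ℝ} (hV : ContDiff ℝ 3 V) : ContDiff ℝ 2 (deriv V) := by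
  have h3 : ContDiff ℝ ((2 : ℕ) + 1) V := by exact_mod_cast hV
  exact (contDiff_succ_iff_deriv.mp h3).2.2

lemma derivV2_contDiff {V : ℝ → ℝ} (hV : ContDiff ℝ 3 V) :
    ContDiff ℝ 1 (deriv (deriv V)) := by
  have h2 : ContDiff ℝ ((1 : ℕ) + 1) (deriv V) := by exact_mod_cast derivV_contDiff hV
  exact (contDiff_succ_iff_deriv.mp h2).2.2

lemma smooth_flux2_rho (h : CrossDiffSol T α V W ρ μ) (t : ℝ) :
    ContDiff ℝ 1 (fun y => ρ t y * deriv V y) :=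
  ((fix_t h.smooth_rho t).of_le (by simp)).mul ((derivV_contDiff h.smooth_V).of_le (by norm_num))

lemma smooth_flux2_mu (h : CrossDiffSol T α V W ρ μ) (t : ℝ) :
    ContDiff ℝ 1 (fun y => μ t y * deriv W y) :=
  ((fix_t h.smooth_mu t).of_le (by simp)).mul ((derivV_contDiff h.smooth_W).of_le (by norm_num))

lemma eq_rho' (h : CrossDiffSol T α V W ρ μ) :
    ∀ t ∈ Set.Icc (0:ℝ) T, ∀ x : ℝ,
      pt ρ t x = deriv (fun y => ρ t y * Afn α ρ μ t y) x
        + deriv (fun y => ρ t y * deriv V y) x := h.eq_rho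

lemma eq_mu' (h : CrossDiffSol T α V W ρ μ) :
    ∀ t ∈ Set.Icc (0:ℝ) T, ∀ x : ℝ,
      pt μ t x = deriv (fun y => μ t y * Afn α ρ μ t y) x
        + deriv (fun y => μ t y * deriv W y) x := h.eq_mu

lemma periodic_flux1_rho (h : CrossDiffSol T α V W ρ μ) (t : ℝ) :
    Periodic (fun y => ρ t y * Afn α ρ μ t y) 1 := fun x => by
  simp only [h.periodic_rho t x, periodic_A h t x]

lemma periodic_flux1_mu (h : CrossDiffSol T α V W ρ μ) (t : ℝ) :
    Periodic (fun y => μ t y * Afn α ρ μ t y) 1 := fun x => by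
  simp only [h.periodic_mu t x, periodic_A h t x]

lemma periodic_flux2_rho (h : CrossDiffSol T α V W ρ μ) (t : ℝ) :
    Periodic (fun y => ρ t y * deriv V y) 1 := fun x => by
  simp only [h.periodic_rho t x, periodic_deriv' h.periodic_V x]

lemma periodic_flux2_mu (h : CrossDiffSol T α V W ρ μ) (t : ℝ) :
    Periodic (fun y => μ t y * deriv W y) 1 := fun x => by
  simp only [h.periodic_mu t x, periodic_deriv' h.periodic_W x]

/-- The integral over the torus of `∂ₜρ` vanishes (for `t ∈ [0,T]`). -/
lemma integral_pt_rho_zero (h : CrossDiffSol T α V W ρ μ) {t : ℝ}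
    (ht : t ∈ Set.Icc (0:ℝ) T) : (∫ x in (0:ℝ)..1, pt ρ t x) = 0 := by
  set g1 : ℝ → ℝ := fun y => ρ t y * Afn α ρ μ t y with hg1
  set g2 : ℝ → ℝ := fun y => ρ t y * deriv V y with hg2
  have hc1 : ContDiff ℝ 1 g1 := (smooth_flux1_rho h t).of_le (by simp)
  have hc2 : ContDiff ℝ 1 g2 := smooth_flux2_rho h t
  have key : (∫ x in (0:ℝ)..1, (deriv g1 x + deriv g2 x))
      = (g1 1 + g2 1) - (g1 0 + g2 0) := by
    apply integral_eq_sub_of_hasDerivAt (f := fun y => g1 y + g2 y)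
      (f' := fun x => deriv g1 x + deriv g2 x)
    · exact fun x _ => (hda_of_contDiff hc1 x).add (hda_of_contDiff hc2 x)
    · exact ((hc1.continuous_deriv le_rfl).add (hc2.continuous_deriv le_rfl)).intervalIntegrable 0 1
  have hper : (g1 1 + g2 1) - (g1 0 + g2 0) = 0 := by
    have e1 : g1 1 = g1 0 := by simpa using periodic_flux1_rho h t 0
    have e2 : g2 1 = g2 0 := by simpa using periodic_flux2_rho h t 0
    rw [e1, e2]; ring
  calc (∫ x in (0:ℝ)..1, pt ρ t x)
      = ∫ x in (0:ℝ)..1, (deriv g1 x + deriv g2 x) :=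
        intervalIntegral.integral_congr (fun x _ => eq_rho' h t ht x)
    _ = 0 := by rw [key, hper]

lemma integral_pt_mu_zero (h : CrossDiffSol T α V W ρ μ) {t : ℝ}
    (ht : t ∈ Set.Icc (0:ℝ) T) : (∫ x in (0:ℝ)..1, pt μ t x) = 0 := by
  set g1 : ℝ → ℝ := fun y => μ t y * Afn α ρ μ t y with hg1
  set g2 : ℝ → ℝ := fun y => μ t y * deriv W y with hg2
  have hc1 : ContDiff ℝ 1 g1 := (smooth_flux1_mu h t).of_le (by simp)
  have hc2 : ContDiff ℝ 1 g2 := smooth_flux2_mu h t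
  have key : (∫ x in (0:ℝ)..1, (deriv g1 x + deriv g2 x))
      = (g1 1 + g2 1) - (g1 0 + g2 0) := by
    apply integral_eq_sub_of_hasDerivAt (f := fun y => g1 y + g2 y)
      (f' := fun x => deriv g1 x + deriv g2 x)
    · exact fun x _ => (hda_of_contDiff hc1 x).add (hda_of_contDiff hc2 x)
    · exact ((hc1.continuous_deriv le_rfl).add (hc2.continuous_deriv le_rfl)).intervalIntegrable 0 1
  have hper : (g1 1 + g2 1) - (g1 0 + g2 0) = 0 := by
    have e1 : g1 1 = g1 0 := by simpa using periodic_flux1_mu h t 0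
    have e2 : g2 1 = g2 0 := by simpa using periodic_flux2_mu h t 0
    rw [e1, e2]; ring
  calc (∫ x in (0:ℝ)..1, pt μ t x)
      = ∫ x in (0:ℝ)..1, (deriv g1 x + deriv g2 x) :=
        intervalIntegral.integral_congr (fun x _ => eq_mu' h t ht x)
    _ = 0 := by rw [key, hper]

lemma pt_S_eq (h : CrossDiffSol T α V W ρ μ) (t x : ℝ) :
    pt (Sfn ρ μ) t x = pt ρ t x + pt μ t x :=
  ((hasDerivAt_pt h.smooth_rho t x).add (hasDerivAt_pt h.smooth_mu t x)).deriv

/-- Conservation of total mass. -/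
lemma mass_const (h : CrossDiffSol T α V W ρ μ) {t : ℝ} (ht : t ∈ Set.Icc (0:ℝ) T) :
    (∫ x in (0:ℝ)..1, Sfn ρ μ t x) = ∫ x in (0:ℝ)..1, Sfn ρ μ 0 x := by
  have key : (∫ s in (0:ℝ)..t, (0:ℝ))
      = (∫ x in (0:ℝ)..1, Sfn ρ μ t x) - ∫ x in (0:ℝ)..1, Sfn ρ μ 0 x := by
    apply integral_eq_sub_of_hasDerivAt
    · intro s hs
      have hs' : s ∈ Set.Icc (0:ℝ) T := by
        rw [Set.uIcc_of_le ht.1] at hs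
        exact ⟨hs.1, le_trans hs.2 ht.2⟩
      have h1 := hasDerivAt_integral (G := Sfn ρ μ) (G' := pt (Sfn ρ μ))
        (smooth_S h).continuous (continuous_pt (smooth_S h))
        (fun t x => hasDerivAt_pt (smooth_S h) t x) s
      have h2 : (∫ x in (0:ℝ)..1, pt (Sfn ρ μ) s x) = 0 := by
        have := intervalIntegral.integral_congr
          (g := fun x => pt ρ s x + pt μ s x) (μ := volume) (a := 0) (b := 1)
          (fun x _ => pt_S_eq h s x)
        rw [this]
        have hadd : (∫ x in (0:ℝ)..1, (pt ρ s x + pt μ s x))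
            = (∫ x in (0:ℝ)..1, pt ρ s x) + ∫ x in (0:ℝ)..1, pt μ s x :=
          intervalIntegral.integral_add
            ((continuous_pt h.smooth_rho |>.comp (Continuous.prodMk_right s)).intervalIntegrable 0 1)
            ((continuous_pt h.smooth_mu |>.comp (Continuous.prodMk_right s)).intervalIntegrable 0 1)
        rw [hadd, integral_pt_rho_zero h hs', integral_pt_mu_zero h hs']
        ring
      rw [h2] at h1
      exact h1
    · exact intervalIntegrable_const
  simp only [intervalIntegral.integral_zero] at key
  linarith

lemma px_S_eq (h : CrossDiffSol T α V W ρ μ) (t x : ℝ) :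
    px (Sfn ρ μ) t x = px ρ t x + px μ t x :=
  ((hasDerivAt_px h.smooth_rho t x).add (hasDerivAt_px h.smooth_mu t x)).deriv

/-- The entropy functional. -/
def Ent (ρ μ : ℝ → ℝ → ℝ) : ℝ → ℝ :=
  fun t => ∫ x in (0:ℝ)..1, (ρ t x * Real.log (ρ t x) + μ t x * Real.log (μ t x))

/-- Candidate derivative of the entropy. -/
def Ent' (ρ μ : ℝ → ℝ → ℝ) : ℝ → ℝ :=
  fun t => ∫ x in (0:ℝ)..1,
    (pt ρ t x * (Real.log (ρ t x) + 1) + pt μ t x * (Real.log (μ t x) + 1))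

/-- Entropy dissipation. -/
def Dfn (α : ℝ) (ρ μ : ℝ → ℝ → ℝ) : ℝ → ℝ :=
  fun t => ∫ x in (0:ℝ)..1, α * (Sfn ρ μ t x) ^ (α - 2) * (px (Sfn ρ μ) t x) ^ 2

/-- Potential remainder term. -/
def Rfn (V W : ℝ → ℝ) (ρ μ : ℝ → ℝ → ℝ) : ℝ → ℝ :=
  fun t => ∫ x in (0:ℝ)..1,
    (deriv (deriv V) x * ρ t x + deriv (deriv W) x * μ t x)

lemma cont_entI (h : CrossDiffSol T α V W ρ μ) :
    Continuous (uncurry fun t x =>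
      (pt ρ t x * (Real.log (ρ t x) + 1) + pt μ t x * (Real.log (μ t x) + 1))) := by
  have c1 : Continuous (uncurry ρ) := h.smooth_rho.continuous
  have c2 : Continuous (uncurry μ) := h.smooth_mu.continuous
  exact ((continuous_pt h.smooth_rho).mul
      ((c1.log fun p => (h.pos_rho p.1 p.2).ne').add continuous_const)).add
    ((continuous_pt h.smooth_mu).mul
      ((c2.log fun p => (h.pos_mu p.1 p.2).ne').add continuous_const))

lemma hasDerivAt_Ent (h : CrossDiffSol T α V W ρ μ) (t₀ : ℝ) :
    HasDerivAt (Ent ρ μ) (Ent' ρ μ t₀) t₀ := by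
  apply hasDerivAt_integral (G' := fun t x =>
    (pt ρ t x * (Real.log (ρ t x) + 1) + pt μ t x * (Real.log (μ t x) + 1)))
  · have c1 : Continuous (uncurry ρ) := h.smooth_rho.continuous
    have c2 : Continuous (uncurry μ) := h.smooth_mu.continuous
    exact (c1.mul (c1.log fun p => (h.pos_rho p.1 p.2).ne')).add
      (c2.mul (c2.log fun p => (h.pos_mu p.1 p.2).ne'))
  · exact cont_entI h
  · intro t x
    have hρ := hasDerivAt_pt h.smooth_rho t x
    have hμ := hasDerivAt_pt h.smooth_mu t x
    have hlρ : HasDerivAt (fun s => Real.log (ρ s x)) (pt ρ t x / ρ t x) t :=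
      hρ.log (h.pos_rho t x).ne'
    have hlμ : HasDerivAt (fun s => Real.log (μ s x)) (pt μ t x / μ t x) t :=
      hμ.log (h.pos_mu t x).ne'
    have := (hρ.mul hlρ).add (hμ.mul hlμ)
    refine this.congr_deriv ?_
    have e1 : (ρ t x : ℝ) ≠ 0 := (h.pos_rho t x).ne'
    have e2 : (μ t x : ℝ) ≠ 0 := (h.pos_mu t x).ne'
    rw [mul_div_assoc', mul_div_assoc', mul_div_cancel_left₀ _ e1, mul_div_cancel_left₀ _ e2]
    ring

/-- The entropy-dissipation identity. -/
lemma Ent'_eq (h : CrossDiffSol T α V W ρ μ) {t : ℝ} (ht : t ∈ Set.Icc (0:ℝ) T) :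
    Ent' ρ μ t = -(Dfn α ρ μ t) + Rfn V W ρ μ t := by
  -- continuity facts at fixed time
  have cρ : Continuous (ρ t) := h.smooth_rho.continuous.comp (Continuous.prodMk_right t)
  have cμ : Continuous (μ t) := h.smooth_mu.continuous.comp (Continuous.prodMk_right t)
  have cpxρ : Continuous (px ρ t) := (continuous_px h.smooth_rho).comp (Continuous.prodMk_right t)
  have cpxμ : Continuous (px μ t) := (continuous_px h.smooth_mu).comp (Continuous.prodMk_right t)
  have cA : Continuous (Afn α ρ μ t) := (smooth_A h).continuous.comp (Continuous.prodMk_right t)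
  have cptρ : Continuous (pt ρ t) := (continuous_pt h.smooth_rho).comp (Continuous.prodMk_right t)
  have cptμ : Continuous (pt μ t) := (continuous_pt h.smooth_mu).comp (Continuous.prodMk_right t)
  have hρne : ∀ x, (ρ t x : ℝ) ≠ 0 := fun x => (h.pos_rho t x).ne'
  have hμne : ∀ x, (μ t x : ℝ) ≠ 0 := fun x => (h.pos_mu t x).ne'
  have cLρ : Continuous (fun x => Real.log (ρ t x) + 1) :=
    (cρ.log hρne).add continuous_const
  have cLμ : Continuous (fun x => Real.log (μ t x) + 1) :=
    (cμ.log hμne).add continuous_const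
  have cvρ : Continuous (fun x => px ρ t x / ρ t x) := cpxρ.div cρ hρne
  have cvμ : Continuous (fun x => px μ t x / μ t x) := cpxμ.div cμ hμne
  -- derivative facts
  have hdLρ : ∀ x, HasDerivAt (fun y => Real.log (ρ t y) + 1) (px ρ t x / ρ t x) x :=
    fun x => ((hasDerivAt_px h.smooth_rho t x).log (hρne x)).add_const 1
  have hdLμ : ∀ x, HasDerivAt (fun y => Real.log (μ t y) + 1) (px μ t x / μ t x) x :=
    fun x => ((hasDerivAt_px h.smooth_mu t x).log (hμne x)).add_const 1
  have pLρ : Periodic (fun x => Real.log (ρ t x) + 1) 1 := fun x => by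
    simp only [h.periodic_rho t x]
  have pLμ : Periodic (fun x => Real.log (μ t x) + 1) 1 := fun x => by
    simp only [h.periodic_mu t x]
  -- flux regularity
  have hc1ρ : ContDiff ℝ 1 (fun y => ρ t y * Afn α ρ μ t y) := (smooth_flux1_rho h t).of_le (by simp)
  have hc1μ : ContDiff ℝ 1 (fun y => μ t y * Afn α ρ μ t y) := (smooth_flux1_mu h t).of_le (by simp)
  have hc2ρ : ContDiff ℝ 1 (fun y => ρ t y * deriv V y) := smooth_flux2_rho h t
  have hc2μ : ContDiff ℝ 1 (fun y => μ t y * deriv W y) := smooth_flux2_mu h t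
  -- main IBP for the nonlinear flux, ρ part
  have ibp1ρ : (∫ x in (0:ℝ)..1, deriv (fun y => ρ t y * Afn α ρ μ t y) x
      * (Real.log (ρ t x) + 1))
      = - ∫ x in (0:ℝ)..1, Afn α ρ μ t x * px ρ t x := by
    rw [ibp_periodic (hda_of_contDiff hc1ρ) hdLρ (hc1ρ.continuous_deriv le_rfl) cvρ
      (periodic_flux1_rho h t) pLρ]
    congr 1
    apply intervalIntegral.integral_congr
    intro x _
    field_simp [hρne x]
  have ibp1μ : (∫ x in (0:ℝ)..1, deriv (fun y => μ t y * Afn α ρ μ t y) x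
      * (Real.log (μ t x) + 1))
      = - ∫ x in (0:ℝ)..1, Afn α ρ μ t x * px μ t x := by
    rw [ibp_periodic (hda_of_contDiff hc1μ) hdLμ (hc1μ.continuous_deriv le_rfl) cvμ
      (periodic_flux1_mu h t) pLμ]
    congr 1
    apply intervalIntegral.integral_congr
    intro x _
    field_simp [hμne x]
  -- IBP for the potential flux, ρ part
  have ibp2ρ : (∫ x in (0:ℝ)..1, deriv (fun y => ρ t y * deriv V y) x
      * (Real.log (ρ t x) + 1))
      = ∫ x in (0:ℝ)..1, deriv (deriv V) x * ρ t x := by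
    rw [ibp_periodic (hda_of_contDiff hc2ρ) hdLρ (hc2ρ.continuous_deriv le_rfl) cvρ
      (periodic_flux2_rho h t) pLρ]
    have e1 : (∫ x in (0:ℝ)..1, (fun y => ρ t y * deriv V y) x * (px ρ t x / ρ t x))
        = ∫ x in (0:ℝ)..1, deriv V x * px ρ t x := by
      apply intervalIntegral.integral_congr
      intro x _
      field_simp [hρne x]
    rw [e1]
    have e2 := ibp_periodic (u := deriv V) (v := ρ t)
      (u' := deriv (deriv V)) (v' := px ρ t)
      (fun x => hda_of_contDiff ((derivV_contDiff h.smooth_V).of_le (by norm_num)) x)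
      (fun x => hasDerivAt_px h.smooth_rho t x)
      ((derivV2_contDiff h.smooth_V).continuous) cpxρ
      (periodic_deriv' h.periodic_V) (h.periodic_rho t)
    linarith
  have ibp2μ : (∫ x in (0:ℝ)..1, deriv (fun y => μ t y * deriv W y) x
      * (Real.log (μ t x) + 1))
      = ∫ x in (0:ℝ)..1, deriv (deriv W) x * μ t x := by
    rw [ibp_periodic (hda_of_contDiff hc2μ) hdLμ (hc2μ.continuous_deriv le_rfl) cvμ
      (periodic_flux2_mu h t) pLμ]
    have e1 : (∫ x in (0:ℝ)..1, (fun y => μ t y * deriv W y) x * (px μ t x / μ t x))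
        = ∫ x in (0:ℝ)..1, deriv W x * px μ t x := by
      apply intervalIntegral.integral_congr
      intro x _
      field_simp [hμne x]
    rw [e1]
    have e2 := ibp_periodic (u := deriv W) (v := μ t)
      (u' := deriv (deriv W)) (v' := px μ t)
      (fun x => hda_of_contDiff ((derivV_contDiff h.smooth_W).of_le (by norm_num)) x)
      (fun x => hasDerivAt_px h.smooth_mu t x)
      ((derivV2_contDiff h.smooth_W).continuous) cpxμ
      (periodic_deriv' h.periodic_W) (h.periodic_mu t)
    linarith
  -- split Ent' into four pieces
  have hsplitρ : ∀ x, pt ρ t x * (Real.log (ρ t x) + 1)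
      = deriv (fun y => ρ t y * Afn α ρ μ t y) x * (Real.log (ρ t x) + 1)
        + deriv (fun y => ρ t y * deriv V y) x * (Real.log (ρ t x) + 1) := by
    intro x
    rw [eq_rho' h t ht x]
    ring
  have hsplitμ : ∀ x, pt μ t x * (Real.log (μ t x) + 1)
      = deriv (fun y => μ t y * Afn α ρ μ t y) x * (Real.log (μ t x) + 1)
        + deriv (fun y => μ t y * deriv W y) x * (Real.log (μ t x) + 1) := by
    intro x
    rw [eq_mu' h t ht x]
    ring
  have hEnt' : Ent' ρ μ t =
      (∫ x in (0:ℝ)..1, deriv (fun y => ρ t y * Afn α ρ μ t y) x * (Real.log (ρ t x) + 1))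
      + (∫ x in (0:ℝ)..1, deriv (fun y => ρ t y * deriv V y) x * (Real.log (ρ t x) + 1))
      + ((∫ x in (0:ℝ)..1, deriv (fun y => μ t y * Afn α ρ μ t y) x * (Real.log (μ t x) + 1))
      + (∫ x in (0:ℝ)..1, deriv (fun y => μ t y * deriv W y) x * (Real.log (μ t x) + 1))) := by
    have hint1 : IntervalIntegrable
        (fun x => deriv (fun y => ρ t y * Afn α ρ μ t y) x * (Real.log (ρ t x) + 1))
        volume 0 1 := ((hc1ρ.continuous_deriv le_rfl).mul cLρ).intervalIntegrable 0 1
    have hint2 : IntervalIntegrable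
        (fun x => deriv (fun y => ρ t y * deriv V y) x * (Real.log (ρ t x) + 1))
        volume 0 1 := ((hc2ρ.continuous_deriv le_rfl).mul cLρ).intervalIntegrable 0 1
    have hint3 : IntervalIntegrable
        (fun x => deriv (fun y => μ t y * Afn α ρ μ t y) x * (Real.log (μ t x) + 1))
        volume 0 1 := ((hc1μ.continuous_deriv le_rfl).mul cLμ).intervalIntegrable 0 1
    have hint4 : IntervalIntegrable
        (fun x => deriv (fun y => μ t y * deriv W y) x * (Real.log (μ t x) + 1))
        volume 0 1 := ((hc2μ.continuous_deriv le_rfl).mul cLμ).intervalIntegrable 0 1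
    have e0 : Ent' ρ μ t = ∫ x in (0:ℝ)..1,
        ((deriv (fun y => ρ t y * Afn α ρ μ t y) x * (Real.log (ρ t x) + 1)
          + deriv (fun y => ρ t y * deriv V y) x * (Real.log (ρ t x) + 1))
        + (deriv (fun y => μ t y * Afn α ρ μ t y) x * (Real.log (μ t x) + 1)
          + deriv (fun y => μ t y * deriv W y) x * (Real.log (μ t x) + 1))) := by
      apply intervalIntegral.integral_congr
      intro x _
      simp only [hsplitρ x, hsplitμ x]
    rw [e0, intervalIntegral.integral_add (hint1.add hint2) (hint3.add hint4),
      intervalIntegral.integral_add hint1 hint2, intervalIntegral.integral_add hint3 hint4]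
  -- combine the drift terms into the dissipation
  have hD : (∫ x in (0:ℝ)..1, Afn α ρ μ t x * px ρ t x)
      + (∫ x in (0:ℝ)..1, Afn α ρ μ t x * px μ t x) = Dfn α ρ μ t := by
    rw [← intervalIntegral.integral_add (f := fun x => Afn α ρ μ t x * px ρ t x)
      (g := fun x => Afn α ρ μ t x * px μ t x) ((cA.mul cpxρ).intervalIntegrable 0 1)
      ((cA.mul cpxμ).intervalIntegrable 0 1)]
    apply intervalIntegral.integral_congr
    intro x _
    have : px (Sfn ρ μ) t x = px ρ t x + px μ t x := px_S_eq h t x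
    simp only [Afn]
    rw [this]
    ring
  have hR : (∫ x in (0:ℝ)..1, deriv (deriv V) x * ρ t x)
      + (∫ x in (0:ℝ)..1, deriv (deriv W) x * μ t x) = Rfn V W ρ μ t := by
    rw [← intervalIntegral.integral_add (f := fun x => deriv (deriv V) x * ρ t x)
      (g := fun x => deriv (deriv W) x * μ t x)
      (((derivV2_contDiff h.smooth_V).continuous.mul cρ).intervalIntegrable 0 1)
      (((derivV2_contDiff h.smooth_W).continuous.mul cμ).intervalIntegrable 0 1)]
    rfl
  rw [hEnt', ibp1ρ, ibp1μ, ibp2ρ, ibp2μ]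
  rw [← hD, ← hR]
  ring

lemma cont_Ent' (h : CrossDiffSol T α V W ρ μ) : Continuous (Ent' ρ μ) :=
  intervalIntegral.continuous_parametric_intervalIntegral_of_continuous' (cont_entI h) 0 1

lemma cont_D_integrand (h : CrossDiffSol T α V W ρ μ) :
    Continuous (fun p : ℝ × ℝ => α * (Sfn ρ μ p.1 p.2) ^ (α - 2) * (px (Sfn ρ μ) p.1 p.2) ^ 2) := by
  have h1 : Continuous (fun p : ℝ × ℝ => (Sfn ρ μ p.1 p.2) ^ (α - 2)) :=
    (smooth_S h).continuous.rpow_const (fun p => Or.inl (pos_S h p.1 p.2).ne')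
  exact (continuous_const.mul h1).mul ((continuous_px (smooth_S h)).pow 2)

lemma cont_D (h : CrossDiffSol T α V W ρ μ) : Continuous (Dfn α ρ μ) :=
  intervalIntegral.continuous_parametric_intervalIntegral_of_continuous'
    (f := fun t x => α * (Sfn ρ μ t x) ^ (α - 2) * (px (Sfn ρ μ) t x) ^ 2)
    (cont_D_integrand h) 0 1

lemma cont_R (h : CrossDiffSol T α V W ρ μ) : Continuous (Rfn V W ρ μ) := by
  apply intervalIntegral.continuous_parametric_intervalIntegral_of_continuous'
    (f := fun t x => deriv (deriv V) x * ρ t x + deriv (deriv W) x * μ t x)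
  exact (((derivV2_contDiff h.smooth_V).continuous.comp continuous_snd).mul
      h.smooth_rho.continuous).add
    (((derivV2_contDiff h.smooth_W).continuous.comp continuous_snd).mul
      h.smooth_mu.continuous)

/-- Time-integrated entropy balance. -/
lemma entropy_balance (h : CrossDiffSol T α V W ρ μ) (hT : 0 ≤ T) :
    (∫ t in (0:ℝ)..T, Dfn α ρ μ t)
      = Ent ρ μ 0 - Ent ρ μ T + ∫ t in (0:ℝ)..T, Rfn V W ρ μ t := by
  have hftc : (∫ t in (0:ℝ)..T, Ent' ρ μ t) = Ent ρ μ T - Ent ρ μ 0 :=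
    integral_eq_sub_of_hasDerivAt (fun t _ => hasDerivAt_Ent h t)
      ((cont_Ent' h).intervalIntegrable 0 T)
  have hcongr : (∫ t in (0:ℝ)..T, Ent' ρ μ t)
      = ∫ t in (0:ℝ)..T, (-(Dfn α ρ μ t) + Rfn V W ρ μ t) := by
    apply intervalIntegral.integral_congr
    intro t ht
    rw [Set.uIcc_of_le hT] at ht
    exact Ent'_eq h ht
  have hadd : (∫ t in (0:ℝ)..T, (-(Dfn α ρ μ t) + Rfn V W ρ μ t))
      = -(∫ t in (0:ℝ)..T, Dfn α ρ μ t) + ∫ t in (0:ℝ)..T, Rfn V W ρ μ t := by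
    rw [intervalIntegral.integral_add (f := fun t => -(Dfn α ρ μ t)) (g := fun t => Rfn V W ρ μ t)
      (((cont_D h).neg).intervalIntegrable 0 T)
      ((cont_R h).intervalIntegrable 0 T), intervalIntegral.integral_neg]
  rw [hcongr, hadd] at hftc
  linarith

lemma mul_log_ge {x : ℝ} (hx : 0 < x) : x - 1 ≤ x * Real.log x := by
  have h := Real.log_le_sub_one_of_pos (inv_pos.mpr hx)
  rw [Real.log_inv] at h
  have h2 : x * x⁻¹ = 1 := mul_inv_cancel₀ hx.ne'
  nlinarith

variable {M E B K : ℝ}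

lemma Ent_zero_le (h : CrossDiffSol T α V W ρ μ) (db : DataBounds V W ρ μ M E B K) :
    Ent ρ μ 0 ≤ E := by
  refine le_trans ?_ db.entropy
  apply intervalIntegral.integral_mono_on (by norm_num)
  · have cρ : Continuous (ρ 0) := h.smooth_rho.continuous.comp (Continuous.prodMk_right 0)
    have cμ : Continuous (μ 0) := h.smooth_mu.continuous.comp (Continuous.prodMk_right 0)
    exact ((cρ.mul (cρ.log fun x => (h.pos_rho 0 x).ne')).add
      (cμ.mul (cμ.log fun x => (h.pos_mu 0 x).ne'))).intervalIntegrable 0 1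
  · have cρ : Continuous (ρ 0) := h.smooth_rho.continuous.comp (Continuous.prodMk_right 0)
    have cμ : Continuous (μ 0) := h.smooth_mu.continuous.comp (Continuous.prodMk_right 0)
    exact ((cρ.mul (cρ.log fun x => (h.pos_rho 0 x).ne').abs).add
      (cμ.mul (cμ.log fun x => (h.pos_mu 0 x).ne').abs)).intervalIntegrable 0 1
  · intro x _
    have h1 : ρ 0 x * Real.log (ρ 0 x) ≤ ρ 0 x * |Real.log (ρ 0 x)| :=
      mul_le_mul_of_nonneg_left (le_abs_self _) (h.pos_rho 0 x).le
    have h2 : μ 0 x * Real.log (μ 0 x) ≤ μ 0 x * |Real.log (μ 0 x)| :=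
      mul_le_mul_of_nonneg_left (le_abs_self _) (h.pos_mu 0 x).le
    exact add_le_add h1 h2

lemma Ent_ge (h : CrossDiffSol T α V W ρ μ) (t : ℝ) : -2 ≤ Ent ρ μ t := by
  have cρ : Continuous (ρ t) := h.smooth_rho.continuous.comp (Continuous.prodMk_right t)
  have cμ : Continuous (μ t) := h.smooth_mu.continuous.comp (Continuous.prodMk_right t)
  have h1 : (∫ x in (0:ℝ)..1, (ρ t x - 1 + (μ t x - 1))) ≤ Ent ρ μ t := by
    apply intervalIntegral.integral_mono_on (by norm_num)
    · exact ((cρ.sub continuous_const).add (cμ.sub continuous_const)).intervalIntegrable 0 1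
    · exact ((cρ.mul (cρ.log fun x => (h.pos_rho t x).ne')).add
        (cμ.mul (cμ.log fun x => (h.pos_mu t x).ne'))).intervalIntegrable 0 1
    · intro x _
      exact add_le_add (mul_log_ge (h.pos_rho t x)) (mul_log_ge (h.pos_mu t x))
  have h2 : (∫ x in (0:ℝ)..1, (ρ t x - 1 + (μ t x - 1)))
      = (∫ x in (0:ℝ)..1, Sfn ρ μ t x) - 2 := by
    have e : (∫ x in (0:ℝ)..1, (ρ t x - 1 + (μ t x - 1)))
        = ∫ x in (0:ℝ)..1, (Sfn ρ μ t x - 2) :=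
      intervalIntegral.integral_congr (fun x _ => by simp only [Sfn]; ring)
    rw [e]
    have hsub : (∫ x in (0:ℝ)..1, (Sfn ρ μ t x - 2))
        = (∫ x in (0:ℝ)..1, Sfn ρ μ t x) - ∫ x in (0:ℝ)..1, (2:ℝ) :=
      intervalIntegral.integral_sub
        (((smooth_S h).continuous.comp (Continuous.prodMk_right t)).intervalIntegrable 0 1)
        intervalIntegrable_const
    rw [hsub]
    simp
  have h3 : 0 ≤ ∫ x in (0:ℝ)..1, Sfn ρ μ t x :=
    intervalIntegral.integral_nonneg (by norm_num) (fun x _ => (pos_S h t x).le)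
  linarith

lemma mass_le (h : CrossDiffSol T α V W ρ μ) (db : DataBounds V W ρ μ M E B K)
    {t : ℝ} (ht : t ∈ Set.Icc (0:ℝ) T) : (∫ x in (0:ℝ)..1, Sfn ρ μ t x) ≤ M := by
  rw [mass_const h ht]
  exact db.mass

lemma R_le (h : CrossDiffSol T α V W ρ μ) (db : DataBounds V W ρ μ M E B K) (hK : 0 ≤ K)
    {t : ℝ} (ht : t ∈ Set.Icc (0:ℝ) T) : Rfn V W ρ μ t ≤ K * M := by
  have cρ : Continuous (ρ t) := h.smooth_rho.continuous.comp (Continuous.prodMk_right t)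
  have cμ : Continuous (μ t) := h.smooth_mu.continuous.comp (Continuous.prodMk_right t)
  have h1 : Rfn V W ρ μ t ≤ ∫ x in (0:ℝ)..1, K * Sfn ρ μ t x := by
    apply intervalIntegral.integral_mono_on (by norm_num)
    · exact (((derivV2_contDiff h.smooth_V).continuous.mul cρ).add
        ((derivV2_contDiff h.smooth_W).continuous.mul cμ)).intervalIntegrable 0 1
    · exact (continuous_const.mul
        ((smooth_S h).continuous.comp (Continuous.prodMk_right t))).intervalIntegrable 0 1
    · intro x _
      have hV : deriv (deriv V) x * ρ t x ≤ K * ρ t x :=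
        mul_le_mul_of_nonneg_right (le_trans (le_abs_self _) (db.normV x).2.2.1)
          (h.pos_rho t x).le
      have hW : deriv (deriv W) x * μ t x ≤ K * μ t x :=
        mul_le_mul_of_nonneg_right (le_trans (le_abs_self _) (db.normW x).2.2.1)
          (h.pos_mu t x).le
      calc deriv (deriv V) x * ρ t x + deriv (deriv W) x * μ t x
          ≤ K * ρ t x + K * μ t x := add_le_add hV hW
        _ = K * Sfn ρ μ t x := by simp only [Sfn]; ring
  have h2 : (∫ x in (0:ℝ)..1, K * Sfn ρ μ t x) = K * ∫ x in (0:ℝ)..1, Sfn ρ μ t x :=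
    intervalIntegral.integral_const_mul K _
  rw [h2] at h1
  exact le_trans h1 (mul_le_mul_of_nonneg_left (mass_le h db ht) hK)

/-- A priori bound on the time-integral of the dissipation. -/
lemma D_bound (h : CrossDiffSol T α V W ρ μ) (db : DataBounds V W ρ μ M E B K)
    (hT : 0 ≤ T) (hK : 0 ≤ K) :
    (∫ t in (0:ℝ)..T, Dfn α ρ μ t) ≤ E + 2 + T * (K * M) := by
  have hb := entropy_balance h hT
  have hR : (∫ t in (0:ℝ)..T, Rfn V W ρ μ t) ≤ ∫ t in (0:ℝ)..T, (K * M : ℝ) := by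
    apply intervalIntegral.integral_mono_on hT ((cont_R h).intervalIntegrable 0 T)
      intervalIntegrable_const
    exact fun t ht => R_le h db hK ht
  have hRc : (∫ t in (0:ℝ)..T, (K * M : ℝ)) = T * (K * M) := by
    simp only [intervalIntegral.integral_const, smul_eq_mul, sub_zero]
  have h0 : Ent ρ μ 0 ≤ E := Ent_zero_le h db
  have hT' : -2 ≤ Ent ρ μ T := Ent_ge h T
  rw [hRc] at hR
  linarith

/-- The function `S^(α/2)`, written exactly as in the statement. -/
def w2fn (α : ℝ) (ρ μ : ℝ → ℝ → ℝ) : ℝ → ℝ → ℝ := fun t x => (ρ t x + μ t x) ^ (α / 2)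

lemma smooth_w2 (h : CrossDiffSol T α V W ρ μ) : ContDiff ℝ (⊤ : ℕ∞) (uncurry (w2fn α ρ μ)) := by
  apply contDiff_iff_contDiffAt.mpr
  intro p
  exact ((smooth_S h).contDiffAt (x := p)).rpow_const_of_ne (pos_S h p.1 p.2).ne'

lemma periodic_w2 (h : CrossDiffSol T α V W ρ μ) (t : ℝ) : Periodic (w2fn α ρ μ t) 1 :=
  fun x => by simp only [w2fn, h.periodic_rho t x, h.periodic_mu t x]

lemma px_w2_eq (h : CrossDiffSol T α V W ρ μ) (t x : ℝ) :
    px (w2fn α ρ μ) t x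
      = px (Sfn ρ μ) t x * (α / 2) * (Sfn ρ μ t x) ^ (α / 2 - 1) :=
  ((hasDerivAt_px (smooth_S h) t x).rpow_const (Or.inl (pos_S h t x).ne')).deriv

lemma sq_px_w2 (h : CrossDiffSol T α V W ρ μ) (t x : ℝ) :
    (px (w2fn α ρ μ) t x) ^ 2
      = (α / 4) * (α * (Sfn ρ μ t x) ^ (α - 2) * (px (Sfn ρ μ) t x) ^ 2) := by
  rw [px_w2_eq h t x]
  have e : ((Sfn ρ μ t x) ^ (α / 2 - 1)) ^ 2 = (Sfn ρ μ t x) ^ (α - 2) := by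
    rw [sq, ← Real.rpow_add (pos_S h t x)]
    congr 1
    ring
  rw [mul_pow, mul_pow, e]
  ring

lemma inner_int_eq (h : CrossDiffSol T α V W ρ μ) (t : ℝ) :
    (∫ x in (0:ℝ)..1, (px (w2fn α ρ μ) t x) ^ 2) = (α / 4) * Dfn α ρ μ t := by
  have e : (∫ x in (0:ℝ)..1, (px (w2fn α ρ μ) t x) ^ 2)
      = ∫ x in (0:ℝ)..1, (α / 4) * (α * (Sfn ρ μ t x) ^ (α - 2) * (px (Sfn ρ μ) t x) ^ 2) :=
    intervalIntegral.integral_congr (fun x _ => sq_px_w2 h t x)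
  rw [e, intervalIntegral.integral_const_mul]
  rfl

/-- First a priori estimate. -/
lemma first_estimate (h : CrossDiffSol T α V W ρ μ) (db : DataBounds V W ρ μ M E B K)
    (hT : 0 ≤ T) (hK : 0 ≤ K) (hα : 0 ≤ α) :
    (∫ t in (0:ℝ)..T, ∫ x in (0:ℝ)..1, (px (w2fn α ρ μ) t x) ^ 2)
      ≤ (α / 4) * (E + 2 + T * (K * M)) := by
  have e : (∫ t in (0:ℝ)..T, ∫ x in (0:ℝ)..1, (px (w2fn α ρ μ) t x) ^ 2)
      = ∫ t in (0:ℝ)..T, (α / 4) * Dfn α ρ μ t :=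
    intervalIntegral.integral_congr (fun t _ => inner_int_eq h t)
  rw [e, intervalIntegral.integral_const_mul]
  exact mul_le_mul_of_nonneg_left (D_bound h db hT hK) (by linarith)

lemma cont_Q (h : CrossDiffSol T α V W ρ μ) :
    Continuous (fun t => ∫ x in (0:ℝ)..1, (px (w2fn α ρ μ) t x) ^ 2) :=
  intervalIntegral.continuous_parametric_intervalIntegral_of_continuous'
    (f := fun t x => (px (w2fn α ρ μ) t x) ^ 2)
    ((continuous_px (smooth_w2 h)).pow 2 |>.congr fun _ => rfl) 0 1

/-- Sup bound at fixed time. -/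
lemma sup_bound (h : CrossDiffSol T α V W ρ μ) (db : DataBounds V W ρ μ M E B K)
    (hα : 0 < α) (hα1 : α ≤ 1) {t : ℝ} (ht : t ∈ Set.Icc (0:ℝ) T) :
    (⨆ x : ℝ, w2fn α ρ μ t x) ^ 2
      ≤ 2 * (1 + M) ^ 2 + 2 * ∫ x in (0:ℝ)..1, (px (w2fn α ρ μ) t x) ^ 2 := by
  set w : ℝ → ℝ := w2fn α ρ μ t with hw
  have cw : Continuous w := (smooth_w2 h).continuous.comp (Continuous.prodMk_right t)
  have hder : ∀ x, HasDerivAt w (px (w2fn α ρ μ) t x) x := hasDerivAt_px (smooth_w2 h) t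
  have cw' : Continuous (px (w2fn α ρ μ) t) :=
    (continuous_px (smooth_w2 h)).comp (Continuous.prodMk_right t)
  have pw : Periodic w 1 := periodic_w2 h t
  have pw' : Periodic (fun x => |px (w2fn α ρ μ) t x|) 1 := fun x => by
    simp only [periodic_px (periodic_w2 h) t x]
  set I : ℝ := ∫ x in (0:ℝ)..1, w x with hI
  set J : ℝ := ∫ x in (0:ℝ)..1, |px (w2fn α ρ μ) t x| with hJ
  have hwpos : ∀ x, 0 < w x := fun x => Real.rpow_pos_of_pos (pos_S h t x) _
  have hI_nonneg : 0 ≤ I :=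
    intervalIntegral.integral_nonneg (by norm_num) (fun x _ => (hwpos x).le)
  have hJ_nonneg : 0 ≤ J :=
    intervalIntegral.integral_nonneg (by norm_num) (fun x _ => abs_nonneg _)
  -- I ≤ 1 + M
  have hI_le : I ≤ 1 + M := by
    have hpt : ∀ x, w x ≤ 1 + Sfn ρ μ t x := by
      intro x
      by_cases h1 : Sfn ρ μ t x ≤ 1
      · have := Real.rpow_le_one (pos_S h t x).le h1 (by linarith : (0:ℝ) ≤ α / 2)
        have h2 := pos_S h t x
        simp only [hw, w2fn]
        simp only [Sfn] at this h2 ⊢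
        linarith
      · push_neg at h1
        have h2 := Real.rpow_le_rpow_of_exponent_le h1.le (by linarith : α / 2 ≤ 1)
        rw [Real.rpow_one] at h2
        simp only [hw, w2fn]
        simp only [Sfn] at h2 ⊢
        linarith
    have hmono : I ≤ ∫ x in (0:ℝ)..1, (1 + Sfn ρ μ t x) := by
      apply intervalIntegral.integral_mono_on (by norm_num)
        (cw.intervalIntegrable 0 1)
        ((continuous_const.add ((smooth_S h).continuous.comp
          (Continuous.prodMk_right t))).intervalIntegrable 0 1)
      exact fun x _ => hpt x
    have hadd : (∫ x in (0:ℝ)..1, (1 + Sfn ρ μ t x))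
        = (∫ _x in (0:ℝ)..1, (1:ℝ)) + ∫ x in (0:ℝ)..1, Sfn ρ μ t x :=
      intervalIntegral.integral_add intervalIntegrable_const
        (((smooth_S h).continuous.comp (Continuous.prodMk_right t)).intervalIntegrable 0 1)
    have hone : (∫ _x in (0:ℝ)..1, (1:ℝ)) = 1 := by simp
    rw [hadd, hone] at hmono
    have := mass_le h db ht
    linarith
  -- minimum point
  obtain ⟨y₀, hy₀mem, hy₀min⟩ := isCompact_Icc.exists_isMinOn
    (Set.nonempty_Icc.mpr (by norm_num : (0:ℝ) ≤ 1)) cw.continuousOn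
  have hwy₀ : w y₀ ≤ I := by
    have : (∫ x in (0:ℝ)..1, w y₀) ≤ I := by
      apply intervalIntegral.integral_mono_on (by norm_num) intervalIntegrable_const
        (cw.intervalIntegrable 0 1)
      exact fun x hx => hy₀min hx
    simpa using this
  -- pointwise sup bound
  have hub : ∀ x, w x ≤ I + J := by
    intro x
    set n : ℤ := ⌊x - y₀⌋ with hn
    set z : ℝ := x - (n : ℝ) with hz
    have hz1 : y₀ ≤ z := by
      have := Int.floor_le (x - y₀)
      simp only [hz, hn]
      linarith
    have hz2 : z ≤ y₀ + 1 := by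
      have := Int.lt_floor_add_one (x - y₀)
      simp only [hz, hn]
      linarith
    have hwz : w z = w x := by
      have := pw.sub_int_mul_eq (x := x) n
      simpa [hz] using this
    have hftc : (∫ u in y₀..z, px (w2fn α ρ μ) t u) = w z - w y₀ :=
      integral_eq_sub_of_hasDerivAt (fun u _ => hder u) (cw'.intervalIntegrable y₀ z)
    have hb1 : (∫ u in y₀..z, px (w2fn α ρ μ) t u)
        ≤ ∫ u in y₀..z, |px (w2fn α ρ μ) t u| := by
      apply intervalIntegral.integral_mono_on hz1 (cw'.intervalIntegrable y₀ z)
        (cw'.abs.intervalIntegrable y₀ z)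
      exact fun u _ => le_abs_self _
    have hb2 : (∫ u in y₀..z, |px (w2fn α ρ μ) t u|)
        ≤ ∫ u in y₀..(y₀ + 1), |px (w2fn α ρ μ) t u| := by
      apply intervalIntegral.integral_mono_interval le_rfl hz1 hz2
      · exact Filter.Eventually.of_forall (fun u => abs_nonneg _)
      · exact cw'.abs.intervalIntegrable y₀ (y₀ + 1)
    have hb3 : (∫ u in y₀..(y₀ + 1), |px (w2fn α ρ μ) t u|) = J := by
      have := pw'.intervalIntegral_add_eq y₀ 0
      simpa using this
    have : w z ≤ w y₀ + J := by
      rw [hb3] at hb2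
      linarith
    rw [hwz] at this
    linarith
  have hbdd : BddAbove (Set.range w) := ⟨I + J, by rintro v ⟨x, rfl⟩; exact hub x⟩
  have hsup_le : (⨆ x : ℝ, w x) ≤ I + J := ciSup_le hub
  have hsup_nonneg : (0:ℝ) ≤ ⨆ x : ℝ, w x :=
    le_trans (hwpos 0).le (le_ciSup hbdd 0)
  have hsq : (⨆ x : ℝ, w x) ^ 2 ≤ (I + J) ^ 2 := by
    apply sq_le_sq'
    · linarith
    · exact hsup_le
  -- Cauchy–Schwarz: J² ≤ ∫ (w')²
  have hJ2 : J ^ 2 ≤ ∫ x in (0:ℝ)..1, (px (w2fn α ρ μ) t x) ^ 2 := by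
    have hptw : ∀ x, (|px (w2fn α ρ μ) t x| - J) ^ 2
        = (px (w2fn α ρ μ) t x) ^ 2 - 2 * J * |px (w2fn α ρ μ) t x| + J ^ 2 := by
      intro x
      rw [sub_sq, sq_abs]
      ring
    have hint1 : IntervalIntegrable (fun x => (px (w2fn α ρ μ) t x) ^ 2) volume 0 1 :=
      ((cw'.pow 2)).intervalIntegrable 0 1
    have hint2 : IntervalIntegrable (fun x => 2 * J * |px (w2fn α ρ μ) t x|) volume 0 1 :=
      (continuous_const.mul cw'.abs).intervalIntegrable 0 1
    have hexp : (∫ x in (0:ℝ)..1, (|px (w2fn α ρ μ) t x| - J) ^ 2)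
        = (∫ x in (0:ℝ)..1, (px (w2fn α ρ μ) t x) ^ 2) - J ^ 2 := by
      rw [intervalIntegral.integral_congr (g := fun x =>
        (px (w2fn α ρ μ) t x) ^ 2 - 2 * J * |px (w2fn α ρ μ) t x| + J ^ 2)
        (fun x _ => hptw x)]
      rw [intervalIntegral.integral_add (hint1.sub hint2) intervalIntegrable_const,
        intervalIntegral.integral_sub hint1 hint2]
      have e1 : (∫ x in (0:ℝ)..1, 2 * J * |px (w2fn α ρ μ) t x|) = 2 * J * J := by
        rw [intervalIntegral.integral_const_mul]
      have e2 : (∫ _x in (0:ℝ)..1, (J ^ 2 : ℝ)) = J ^ 2 := by simp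
      rw [e1, e2]
      ring
    have h0 : 0 ≤ ∫ x in (0:ℝ)..1, (|px (w2fn α ρ μ) t x| - J) ^ 2 :=
      intervalIntegral.integral_nonneg (by norm_num) (fun x _ => sq_nonneg _)
    linarith
  have hIsq : I ^ 2 ≤ (1 + M) ^ 2 := by nlinarith
  nlinarith [sq_nonneg (I - J)]

/-- Second a priori estimate. -/
lemma second_estimate (h : CrossDiffSol T α V W ρ μ) (db : DataBounds V W ρ μ M E B K)
    (hT : 0 ≤ T) (hα : 0 < α) (hα1 : α ≤ 1) (hM : 0 ≤ M) (hK : 0 ≤ K) (hE : 0 ≤ E) :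
    (∫ t in (0:ℝ)..T, (⨆ x : ℝ, w2fn α ρ μ t x) ^ 2)
      ≤ 2 * (1 + M) ^ 2 * T + 2 * ((α / 4) * (E + 2 + T * (K * M))) := by
  have hKM : 0 ≤ T * (K * M) := mul_nonneg hT (mul_nonneg hK hM)
  by_cases hInt : IntervalIntegrable (fun t => (⨆ x : ℝ, w2fn α ρ μ t x) ^ 2) volume 0 T
  · have hg : Continuous (fun t => 2 * (1 + M) ^ 2
        + 2 * ∫ x in (0:ℝ)..1, (px (w2fn α ρ μ) t x) ^ 2) :=
      continuous_const.add (continuous_const.mul (cont_Q h))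
    have hmono : (∫ t in (0:ℝ)..T, (⨆ x : ℝ, w2fn α ρ μ t x) ^ 2)
        ≤ ∫ t in (0:ℝ)..T, (2 * (1 + M) ^ 2
          + 2 * ∫ x in (0:ℝ)..1, (px (w2fn α ρ μ) t x) ^ 2) := by
      apply intervalIntegral.integral_mono_on hT hInt (hg.intervalIntegrable 0 T)
      exact fun t ht => sup_bound h db hα hα1 ht
    have hsplit : (∫ t in (0:ℝ)..T, (2 * (1 + M) ^ 2
          + 2 * ∫ x in (0:ℝ)..1, (px (w2fn α ρ μ) t x) ^ 2))
        = 2 * (1 + M) ^ 2 * T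
          + 2 * ∫ t in (0:ℝ)..T, ∫ x in (0:ℝ)..1, (px (w2fn α ρ μ) t x) ^ 2 := by
      rw [intervalIntegral.integral_add (f := fun _ => 2 * (1 + M) ^ 2)
        (g := fun t => 2 * ∫ x in (0:ℝ)..1, (px (w2fn α ρ μ) t x) ^ 2) intervalIntegrable_const
        ((continuous_const.mul (cont_Q h)).intervalIntegrable 0 T)]
      have e3 : (∫ t in (0:ℝ)..T, 2 * ∫ x in (0:ℝ)..1, (px (w2fn α ρ μ) t x) ^ 2)
          = 2 * ∫ t in (0:ℝ)..T, ∫ x in (0:ℝ)..1, (px (w2fn α ρ μ) t x) ^ 2 :=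
        intervalIntegral.integral_const_mul 2 _
      rw [e3]
      simp only [intervalIntegral.integral_const, smul_eq_mul, sub_zero]
      ring
    rw [hsplit] at hmono
    have hfe := first_estimate h db hT hK hα.le
    linarith
  · rw [intervalIntegral.integral_undef hInt]
    have h1 : (0:ℝ) ≤ 2 * (1 + M) ^ 2 * T :=
      mul_nonneg (mul_nonneg (by norm_num) (sq_nonneg _)) hT
    have h2 : (0:ℝ) ≤ (α / 4) * (E + 2 + T * (K * M)) :=
      mul_nonneg (by linarith) (by linarith)
    linarith

end Sol


end CD


/-- A priori estimates: `∂ₓ(S^(α/2)) ∈ L²((0,T)×𝕋)` and `S^(α/2) ∈ L²((0,T); L^∞(𝕋))`,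
with a constant depending only on `T, α, M, E, K`. -/
theorem estimate_S_alpha_half (T α M E K : ℝ) (hT : 0 < T) (hα : 0 < α) (hα1 : α ≤ 1)
    (hM : 0 < M) (hE : 0 < E) (hK : 0 < K) :
    ∃ C : ℝ, ∀ (B : ℝ) (V W : ℝ → ℝ) (ρ μ : ℝ → ℝ → ℝ), 0 < B →
      CrossDiffSol T α V W ρ μ → DataBounds V W ρ μ M E B K →
      (∫ t in (0:ℝ)..T, ∫ x in (0:ℝ)..1,
          (deriv (fun y => (ρ t y + μ t y) ^ (α / 2)) x) ^ 2) ≤ C ∧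
      (∫ t in (0:ℝ)..T, (⨆ x : ℝ, (ρ t x + μ t x) ^ (α / 2)) ^ 2) ≤ C := by
  refine ⟨(α / 4) * (E + 2 + T * (K * M)) + (2 * (1 + M) ^ 2 * T
    + 2 * ((α / 4) * (E + 2 + T * (K * M)))), ?_⟩
  intro B V W ρ μ hB hsol hdb
  have hKM : 0 ≤ T * (K * M) := by positivity
  have h2 : (0:ℝ) ≤ (α / 4) * (E + 2 + T * (K * M)) := by positivity
  have h1 : (0:ℝ) ≤ 2 * (1 + M) ^ 2 * T := by positivity
  constructor
  · have hfe := CD.first_estimate hsol hdb hT.le hK.le hα.le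
    have hcast : (∫ t in (0:ℝ)..T, ∫ x in (0:ℝ)..1,
        (deriv (fun y => (ρ t y + μ t y) ^ (α / 2)) x) ^ 2)
        = ∫ t in (0:ℝ)..T, ∫ x in (0:ℝ)..1, (px (CD.w2fn α ρ μ) t x) ^ 2 := rfl
    rw [hcast]
    linarith
  · have hse := CD.second_estimate hsol hdb hT.le hα hα1 hM.le hK.le hE.le
    have hcast : (∫ t in (0:ℝ)..T, (⨆ x : ℝ, (ρ t x + μ t x) ^ (α / 2)) ^ 2)
        = ∫ t in (0:ℝ)..T, (⨆ x : ℝ, CD.w2fn α ρ μ t x) ^ 2 := rfl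
    rw [hcast]
    linarith
end
end

section
/- Assume 0 < α < 1. There exists a constant C, depending only on T, α, M, E, K, such that every smooth positive solution of the cross-diffusion system on [0,T] with potentials V, W ∈ C³(𝕋) and data bounds (M, E, B, K) satisfies ∫₀^T ∫_𝕋 |∂_x log S(t,x)|² dx dt ≤ C, where S = ρ + μ. -/
open MeasureTheory Real Set Filter

noncomputable section

namespace CDaux

/-- section in x direction -/
lemma hasDerivAt_sectx {f : ℝ → ℝ → ℝ} (hf : Differentiable ℝ (Function.uncurry f))
    (t x : ℝ) :
    HasDerivAt (fun y => f t y) (fderiv ℝ (Function.uncurry f) (t, x) (0, 1)) x := by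
  have h1 : HasFDerivAt (Function.uncurry f) (fderiv ℝ (Function.uncurry f) (t, x)) (t, x) :=
    (hf (t, x)).hasFDerivAt
  have h2 : HasDerivAt (fun y : ℝ => ((t, y) : ℝ × ℝ)) ((0, 1) : ℝ × ℝ) x :=
    (hasDerivAt_const x t).prodMk (hasDerivAt_id x)
  exact h1.comp_hasDerivAt x h2

lemma hasDerivAt_sectt {f : ℝ → ℝ → ℝ} (hf : Differentiable ℝ (Function.uncurry f))
    (t x : ℝ) :
    HasDerivAt (fun s => f s x) (fderiv ℝ (Function.uncurry f) (t, x) (1, 0)) t := by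
  have h1 : HasFDerivAt (Function.uncurry f) (fderiv ℝ (Function.uncurry f) (t, x)) (t, x) :=
    (hf (t, x)).hasFDerivAt
  have h2 : HasDerivAt (fun s : ℝ => ((s, x) : ℝ × ℝ)) ((1, 0) : ℝ × ℝ) t :=
    (hasDerivAt_id t).prodMk (hasDerivAt_const t x)
  exact h1.comp_hasDerivAt t h2

lemma px_eq {f : ℝ → ℝ → ℝ} (hf : Differentiable ℝ (Function.uncurry f)) (t x : ℝ) :
    px f t x = fderiv ℝ (Function.uncurry f) (t, x) (0, 1) :=
  (hasDerivAt_sectx hf t x).deriv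

lemma pt_eq {f : ℝ → ℝ → ℝ} (hf : Differentiable ℝ (Function.uncurry f)) (t x : ℝ) :
    pt f t x = fderiv ℝ (Function.uncurry f) (t, x) (1, 0) :=
  (hasDerivAt_sectt hf t x).deriv

lemma hasDerivAt_px {f : ℝ → ℝ → ℝ} (hf : Differentiable ℝ (Function.uncurry f)) (t x : ℝ) :
    HasDerivAt (fun y => f t y) (px f t x) x := by
  rw [px_eq hf]; exact hasDerivAt_sectx hf t x

lemma hasDerivAt_pt {f : ℝ → ℝ → ℝ} (hf : Differentiable ℝ (Function.uncurry f)) (t x : ℝ) :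
    HasDerivAt (fun s => f s x) (pt f t x) t := by
  rw [pt_eq hf]; exact hasDerivAt_sectt hf t x

lemma contDiff_px {f : ℝ → ℝ → ℝ} {n : WithTop ℕ∞}
    (hf : ContDiff ℝ (⊤ : ℕ∞) (Function.uncurry f)) (hn : n ≠ ⊤ := by simp) :
    ContDiff ℝ n (Function.uncurry (px f)) := by
  have hd : Differentiable ℝ (Function.uncurry f) := hf.differentiable (by simp)
  have h1 : ContDiff ℝ n (fderiv ℝ (Function.uncurry f)) :=
    hf.fderiv_right (by lift n to ℕ∞ using hn; exact_mod_cast le_top)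
  have he : Function.uncurry (px f)
      = fun p : ℝ × ℝ => fderiv ℝ (Function.uncurry f) p (0, 1) := by
    funext p
    exact px_eq hd p.1 p.2
  rw [he]
  exact h1.clm_apply contDiff_const

lemma contDiff_pt {f : ℝ → ℝ → ℝ} {n : WithTop ℕ∞}
    (hf : ContDiff ℝ (⊤ : ℕ∞) (Function.uncurry f)) (hn : n ≠ ⊤ := by simp) :
    ContDiff ℝ n (Function.uncurry (pt f)) := by
  have hd : Differentiable ℝ (Function.uncurry f) := hf.differentiable (by simp)
  have h1 : ContDiff ℝ n (fderiv ℝ (Function.uncurry f)) :=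
    hf.fderiv_right (by lift n to ℕ∞ using hn; exact_mod_cast le_top)
  have he : Function.uncurry (pt f)
      = fun p : ℝ × ℝ => fderiv ℝ (Function.uncurry f) p (1, 0) := by
    funext p
    exact pt_eq hd p.1 p.2
  rw [he]
  exact h1.clm_apply contDiff_const

lemma contDiff_sect {f : ℝ → ℝ → ℝ} {n : WithTop ℕ∞}
    (hf : ContDiff ℝ n (Function.uncurry f)) (t : ℝ) : ContDiff ℝ n (f t) := by
  have : (f t) = (Function.uncurry f) ∘ (fun y : ℝ => (t, y)) := rfl
  rw [this]
  exact hf.comp (contDiff_const.prodMk contDiff_id)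

lemma periodic_deriv {f : ℝ → ℝ} (hf : Function.Periodic f 1) :
    Function.Periodic (deriv f) 1 := by
  intro x
  have h : (fun y => f (y + 1)) = f := funext hf
  have := deriv_comp_add_const f 1 x
  rw [h] at this
  exact this.symm

/-- differentiation under the interval integral, continuous setting -/
lemma hasDerivAt_param_integral {F F' : ℝ → ℝ → ℝ}
    (hF : Continuous (Function.uncurry F)) (hF' : Continuous (Function.uncurry F'))
    (hd : ∀ t x, HasDerivAt (fun s => F s x) (F' t x) t) (t₀ : ℝ) :
    HasDerivAt (fun t => ∫ x in (0:ℝ)..1, F t x) (∫ x in (0:ℝ)..1, F' t₀ x) t₀ := by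
  have hcomp : IsCompact ((Icc (t₀ - 1) (t₀ + 1)) ×ˢ (Icc (0:ℝ) 1)) :=
    isCompact_Icc.prod isCompact_Icc
  obtain ⟨C, hC⟩ := hcomp.exists_bound_of_continuousOn hF'.continuousOn
  have key := intervalIntegral.hasDerivAt_integral_of_dominated_loc_of_deriv_le
    (F := F) (F' := F') (x₀ := t₀) (a := (0:ℝ)) (b := 1) (μ := volume)
    (bound := fun _ => C) (s := Metric.ball t₀ 1) (Metric.ball_mem_nhds t₀ one_pos)
    (Filter.Eventually.of_forall (fun t =>
      ((hF.comp (Continuous.prodMk_right t)).aestronglyMeasurable)))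
    ((hF.comp (Continuous.prodMk_right t₀)).intervalIntegrable 0 1)
    ((hF'.comp (Continuous.prodMk_right t₀)).aestronglyMeasurable)
    (Filter.Eventually.of_forall (fun x hx t ht => ?_))
    (intervalIntegrable_const)
    (Filter.Eventually.of_forall (fun x _ t _ => hd t x))
  · exact key.2
  · have hxmem : x ∈ Icc (0:ℝ) 1 := by
      have : x ∈ Ioc (0:ℝ) 1 := by
        simpa [Set.uIoc_of_le (by norm_num : (0:ℝ) ≤ 1)] using hx
      exact ⟨this.1.le, this.2⟩
    have htmem : t ∈ Icc (t₀ - 1) (t₀ + 1) := by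
      have h' : |t - t₀| < 1 := by
        simpa [Real.dist_eq] using Metric.mem_ball.1 ht
      have h'' := abs_lt.1 h'
      constructor <;> linarith [h''.1, h''.2]
    simpa [Real.norm_eq_abs] using hC (t, x) ⟨htmem, hxmem⟩

/-- From a differential inequality on `[0,T]` to an integral bound. -/
lemma key_integrate {Φ Φd D : ℝ → ℝ} {c T : ℝ} (hT : 0 < T)
    (hΦ : ∀ t, HasDerivAt Φ (Φd t) t) (hD : Continuous D)
    (hbound : ∀ t ∈ Icc (0:ℝ) T, Φd t ≤ -D t + c) :
    ∫ t in (0:ℝ)..T, D t ≤ Φ 0 - Φ T + c * T := by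
  set Θ : ℝ → ℝ := fun t => Φ t + (∫ τ in (0:ℝ)..t, D τ) - c * t with hΘdef
  have hΘd : ∀ t, HasDerivAt Θ (Φd t + D t - c) t := by
    intro t
    have h1 : HasDerivAt (fun u => ∫ τ in (0:ℝ)..u, D τ) (D t) t :=
      intervalIntegral.integral_hasDerivAt_right (hD.intervalIntegrable 0 t)
        (hD.stronglyMeasurableAtFilter volume (nhds t)) hD.continuousAt
    have h2 : HasDerivAt (fun u : ℝ => c * u) c t := by
      simpa using (hasDerivAt_id t).const_mul c
    exact ((hΦ t).add h1).sub h2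
  have hanti : AntitoneOn Θ (Icc (0:ℝ) T) := by
    apply antitoneOn_of_deriv_nonpos (convex_Icc 0 T)
    · have hΦc : Continuous Φ := by
        have : Differentiable ℝ Φ := fun t => (hΦ t).differentiableAt
        exact this.continuous
      have hc : Continuous fun t => ∫ τ in (0:ℝ)..t, D τ :=
        intervalIntegral.continuous_primitive (fun a b => hD.intervalIntegrable a b) 0
      exact ((hΦc.add hc).sub (continuous_const.mul continuous_id)).continuousOn
    · intro t ht
      exact (hΘd t).differentiableAt.differentiableWithinAt
    · intro t ht
      rw [(hΘd t).deriv]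
      rw [interior_Icc] at ht
      have := hbound t ⟨ht.1.le, ht.2.le⟩
      linarith
  have h0T : Θ T ≤ Θ 0 := hanti (left_mem_Icc.2 hT.le) (right_mem_Icc.2 hT.le) hT.le
  simp only [hΘdef] at h0T
  simp only [intervalIntegral.integral_same, mul_zero, add_zero, sub_zero] at h0T
  linarith

end CDaux

def psiF (α u : ℝ) : ℝ := (-(u ^ (1-α)) + 2*(u+4) ^ (1-α) - (u+8) ^ (1-α)) / (α*(1-α))
def psiF' (α u : ℝ) : ℝ := (-(u ^ (-α)) + 2*(u+4) ^ (-α) - (u+8) ^ (-α)) / α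
def psiF'' (α u : ℝ) : ℝ := u ^ (-1-α) - 2*(u+4) ^ (-1-α) + (u+8) ^ (-1-α)

namespace CDaux

variable {α u : ℝ}

lemma hder {u : ℝ} (c p : ℝ) (hc : 0 ≤ c) (hu : 0 < u) :
    HasDerivAt (fun v : ℝ => (v+c) ^ p) (p*(u+c) ^ (p-1)) u := by
  have h1 : HasDerivAt (fun v : ℝ => v + c) 1 u := (hasDerivAt_id u).add_const c
  have h2 := Real.hasDerivAt_rpow_const (x := u+c) (p := p) (Or.inl (by positivity))
  simpa using h1.rpow_const (p := p) (Or.inl (by positivity))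

lemma psiF_hasDeriv (hα : 0 < α) (hα1 : α < 1) (hu : 0 < u) :
    HasDerivAt (psiF α) (psiF' α u) u := by
  have h0 := hder 0 (1-α) le_rfl hu
  have h4 := hder 4 (1-α) (by norm_num) hu
  have h8 := hder 8 (1-α) (by norm_num) hu
  simp only [add_zero] at h0
  have hcomb := (((h0.neg.add (h4.const_mul 2)).sub h8).div_const (α*(1-α)))
  have he : (1:ℝ)-α-1 = -α := by ring
  rw [he] at hcomb
  refine hcomb.congr_deriv (Eq.symm ?_)
  unfold psiF'
  have hα2 : (1:ℝ)-α ≠ 0 := by linarith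
  field_simp

lemma psiF'_hasDeriv (hα : 0 < α) (hα1 : α < 1) (hu : 0 < u) :
    HasDerivAt (psiF' α) (psiF'' α u) u := by
  have h0 := hder 0 (-α) le_rfl hu
  have h4 := hder 4 (-α) (by norm_num) hu
  have h8 := hder 8 (-α) (by norm_num) hu
  simp only [add_zero] at h0
  have hcomb := (((h0.neg.add (h4.const_mul 2)).sub h8).div_const α)
  have he : -α-1 = -1-α := by ring
  rw [he] at hcomb
  refine hcomb.congr_deriv (Eq.symm ?_)
  unfold psiF''
  field_simp
  ring

/-- mean value identity for the difference of two rpow values -/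
lemma diff4 (hα : 0 < α) (hu : 0 < u) :
    ∃ c ∈ Ioo u (u+4), u ^ (-1-α) - (u+4) ^ (-1-α) = 4*(1+α)*c ^ (-2-α) := by
  have hlt : u < u + 4 := by linarith
  have hcont : ContinuousOn (fun v : ℝ => v ^ (-1-α)) (Icc u (u+4)) := by
    intro v hv
    have hv0 : (0:ℝ) < v := lt_of_lt_of_le hu hv.1
    exact (Real.continuousAt_rpow_const v (-1-α) (Or.inl (ne_of_gt hv0))).continuousWithinAt
  have hderiv : ∀ v ∈ Ioo u (u+4),
      HasDerivAt (fun v : ℝ => v ^ (-1-α)) ((-1-α) * v ^ (-2-α)) v := by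
    intro v hv
    have hv0 : (0:ℝ) < v := lt_trans hu hv.1
    have := Real.hasDerivAt_rpow_const (x := v) (p := -1-α) (Or.inl (ne_of_gt hv0))
    have he : -1-α-1 = -2-α := by ring
    rwa [he] at this
  obtain ⟨c, hc, hceq⟩ := exists_hasDerivAt_eq_slope (fun v : ℝ => v ^ (-1-α))
    (fun v => (-1-α) * v ^ (-2-α)) hlt hcont hderiv
  refine ⟨c, hc, ?_⟩
  have h4 : (u+4) - u = 4 := by ring
  rw [h4] at hceq
  have : (u+4) ^ (-1-α) - u ^ (-1-α) = 4 * ((-1-α) * c ^ (-2-α)) := by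
    field_simp at hceq
    linarith [hceq]
  nlinarith [this]

lemma psiF''_nonneg (hα : 0 < α) (hu : 0 < u) : 0 ≤ psiF'' α u := by
  obtain ⟨c₁, hc₁, he₁⟩ := diff4 hα hu
  obtain ⟨c₂, hc₂, he₂⟩ := diff4 hα (by linarith : (0:ℝ) < u + 4)
  have hu44 : u + 4 + 4 = u + 8 := by ring
  rw [hu44] at he₂ hc₂
  have hc12 : c₁ ≤ c₂ := le_of_lt (lt_trans hc₁.2 hc₂.1)
  have hmono : c₂ ^ (-2-α) ≤ c₁ ^ (-2-α) :=
    Real.rpow_le_rpow_of_nonpos (lt_trans hu hc₁.1) hc12 (by linarith)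
  have hexp : psiF'' α u
      = (u ^ (-1-α) - (u+4) ^ (-1-α)) - ((u+4) ^ (-1-α) - (u+8) ^ (-1-α)) := by
    unfold psiF''; ring
  rw [hexp, he₁, he₂]
  nlinarith [hmono]

lemma psiF''_lower (hα : 0 < α) (hu : 0 < u) (hu1 : u ≤ 1) :
    u ^ (-1-α) / 2 ≤ psiF'' α u := by
  have h1 : (u+4) ^ (-1-α) ≤ (4:ℝ) ^ (-1-α) :=
    Real.rpow_le_rpow_of_nonpos (by norm_num) (by linarith) (by linarith)
  have h2 : (4:ℝ) ^ (-1-α) ≤ (4:ℝ) ^ (-1:ℝ) :=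
    Real.rpow_le_rpow_of_exponent_le (by norm_num) (by linarith)
  have h3 : (4:ℝ) ^ (-1:ℝ) = 1/4 := by
    rw [Real.rpow_neg_one]; norm_num
  have h14 : (u+4) ^ (-1-α) ≤ 1/4 := by
    calc (u+4) ^ (-1-α) ≤ (4:ℝ) ^ (-1-α) := h1
    _ ≤ (4:ℝ) ^ (-1:ℝ) := h2
    _ = 1/4 := h3
  have h4 : (1:ℝ) ≤ u ^ (-1-α) :=
    Real.one_le_rpow_of_pos_of_le_one_of_nonpos hu hu1 (by linarith)
  have h5 : (0:ℝ) ≤ (u+8) ^ (-1-α) := Real.rpow_nonneg (by linarith) _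
  unfold psiF''
  linarith

lemma psiF''_upper (hα : 0 < α) (hα1 : α < 1) (hu : 0 < u) :
    u ^ (3-α) * psiF'' α u ≤ 8*(1+u) := by
  have h48 : (u+8) ^ (-1-α) ≤ (u+4) ^ (-1-α) :=
    Real.rpow_le_rpow_of_nonpos (by linarith) (by linarith) (by linarith)
  have hpow3 : (0:ℝ) ≤ u ^ (3-α) := Real.rpow_nonneg hu.le _
  rcases le_or_gt u 1 with hu1 | hu1
  · -- small u
    have hb : psiF'' α u ≤ u ^ (-1-α) := by
      have h40 : (0:ℝ) ≤ (u+4) ^ (-1-α) := Real.rpow_nonneg (by linarith) _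
      unfold psiF''; nlinarith
    have : u ^ (3-α) * psiF'' α u ≤ u ^ (3-α) * u ^ (-1-α) :=
      mul_le_mul_of_nonneg_left hb hpow3
    have heq : u ^ (3-α) * u ^ (-1-α) = u ^ (2-2*α) := by
      rw [← Real.rpow_add hu]; ring_nf
    have hle1 : u ^ (2-2*α) ≤ 1 := Real.rpow_le_one hu.le hu1 (by linarith)
    nlinarith
  · -- large u
    obtain ⟨c₁, hc₁, he₁⟩ := diff4 hα hu
    have hb : psiF'' α u ≤ 4*(1+α)*c₁ ^ (-2-α) := by
      have hexp : psiF'' α u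
          = (u ^ (-1-α) - (u+4) ^ (-1-α)) - ((u+4) ^ (-1-α) - (u+8) ^ (-1-α)) := by
        unfold psiF''; ring
      rw [hexp, he₁]
      nlinarith [h48]
    have hmono : c₁ ^ (-2-α) ≤ u ^ (-2-α) :=
      Real.rpow_le_rpow_of_nonpos hu hc₁.1.le (by linarith)
    have hb2 : psiF'' α u ≤ 8 * u ^ (-2-α) := by
      have h0 : (0:ℝ) ≤ u ^ (-2-α) := Real.rpow_nonneg hu.le _
      nlinarith [hb, hmono]
    have : u ^ (3-α) * psiF'' α u ≤ u ^ (3-α) * (8 * u ^ (-2-α)) :=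
      mul_le_mul_of_nonneg_left hb2 hpow3
    have heq : u ^ (3-α) * (8 * u ^ (-2-α)) = 8 * u ^ (1-2*α) := by
      rw [mul_comm (8:ℝ) _, ← mul_assoc, ← Real.rpow_add hu]; ring_nf
    have hle : u ^ (1-2*α) ≤ 1 + u := by
      rcases le_or_gt (1-2*α) 0 with hc | hc
      · have := Real.rpow_le_one_of_one_le_of_nonpos hu1.le hc
        linarith
      · have h := Real.rpow_le_rpow_of_exponent_le hu1.le (by linarith : 1-2*α ≤ 1)
        rw [Real.rpow_one] at h
        linarith
    nlinarith
  
lemma psiF_abs (hα : 0 < α) (hα1 : α < 1) (hu : 0 < u) :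
    |psiF α u| ≤ 17/(α*(1-α)) * (1+u) := by
  have hden : (0:ℝ) < α*(1-α) := by nlinarith
  have hA0 : (0:ℝ) ≤ u ^ (1-α) := Real.rpow_nonneg hu.le _
  have hB0 : (0:ℝ) ≤ (u+4) ^ (1-α) := Real.rpow_nonneg (by linarith) _
  have hC0 : (0:ℝ) ≤ (u+8) ^ (1-α) := Real.rpow_nonneg (by linarith) _
  have hA1 : u ^ (1-α) ≤ 1 + u := by
    rcases le_or_gt u 1 with h | h
    · have := Real.rpow_le_one hu.le h (by linarith : (0:ℝ) ≤ 1-α)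
      linarith
    · have h2 := Real.rpow_le_rpow_of_exponent_le h.le (by linarith : 1-α ≤ 1)
      rw [Real.rpow_one] at h2
      linarith
  have hB1 : (u+4) ^ (1-α) ≤ u+4 := by
    have h2 := Real.rpow_le_rpow_of_exponent_le (by linarith : (1:ℝ) ≤ u+4)
      (by linarith : 1-α ≤ 1)
    rwa [Real.rpow_one] at h2
  have hC1 : (u+8) ^ (1-α) ≤ u+8 := by
    have h2 := Real.rpow_le_rpow_of_exponent_le (by linarith : (1:ℝ) ≤ u+8)
      (by linarith : 1-α ≤ 1)
    rwa [Real.rpow_one] at h2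
  have hnum : |(-(u ^ (1-α)) + 2*(u+4) ^ (1-α) - (u+8) ^ (1-α))| ≤ 17*(1+u) :=
    abs_le.2 ⟨by linarith, by linarith⟩
  unfold psiF
  rw [abs_div, abs_of_pos hden]
  calc |(-(u ^ (1-α)) + 2*(u+4) ^ (1-α) - (u+8) ^ (1-α))| / (α*(1-α))
      ≤ (17*(1+u)) / (α*(1-α)) := by gcongr
    _ = 17/(α*(1-α)) * (1+u) := by ring

end CDaux

namespace CDaux

open Function

def St (ρ μ : ℝ → ℝ → ℝ) : ℝ → ℝ → ℝ := fun t x => ρ t x + μ t x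
def Av (α : ℝ) (ρ μ : ℝ → ℝ → ℝ) : ℝ → ℝ → ℝ :=
  fun t x => α * St ρ μ t x ^ (α-2) * px (St ρ μ) t x
def Gro (α : ℝ) (V : ℝ → ℝ) (ρ μ : ℝ → ℝ → ℝ) : ℝ → ℝ → ℝ :=
  fun t x => ρ t x * Av α ρ μ t x + ρ t x * deriv V x
def Gmu (α : ℝ) (W : ℝ → ℝ) (ρ μ : ℝ → ℝ → ℝ) : ℝ → ℝ → ℝ :=
  fun t x => μ t x * Av α ρ μ t x + μ t x * deriv W x
def GS (α : ℝ) (V W : ℝ → ℝ) (ρ μ : ℝ → ℝ → ℝ) : ℝ → ℝ → ℝ :=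
  fun t x => St ρ μ t x * Av α ρ μ t x + (ρ t x * deriv V x + μ t x * deriv W x)

variable {T α : ℝ} {V W : ℝ → ℝ} {ρ μ : ℝ → ℝ → ℝ}

section Basic

variable (sol : CrossDiffSol T α V W ρ μ)
include sol

lemma S_smooth : ContDiff ℝ (⊤ : ℕ∞) (uncurry (St ρ μ)) := sol.smooth_rho.add sol.smooth_mu

lemma S_pos : ∀ t x, 0 < St ρ μ t x := fun t x => add_pos (sol.pos_rho t x) (sol.pos_mu t x)

lemma S_per : ∀ t, Function.Periodic (St ρ μ t) 1 := by
  intro t x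
  simp only [St]
  rw [sol.periodic_rho t x, sol.periodic_mu t x]

lemma pxS_smooth {n : WithTop ℕ∞} (hn : n ≠ ⊤ := by simp) : ContDiff ℝ n (uncurry (px (St ρ μ))) :=
  contDiff_px (S_smooth sol) hn

lemma Vd2 : ContDiff ℝ 2 (deriv V) := by
  have h := sol.smooth_V
  have h3 : ContDiff ℝ ((2:ℕ) + 1) V := by exact_mod_cast h
  exact (contDiff_succ_iff_deriv.1 h3).2.2

lemma Wd2 : ContDiff ℝ 2 (deriv W) := by
  have h := sol.smooth_W
  have h3 : ContDiff ℝ ((2:ℕ) + 1) W := by exact_mod_cast h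
  exact (contDiff_succ_iff_deriv.1 h3).2.2

lemma Vdd1 : ContDiff ℝ 1 (deriv (deriv V)) := by
  have h := Vd2 sol
  have h2 : ContDiff ℝ ((1:ℕ) + 1) (deriv V) := by exact_mod_cast h
  exact (contDiff_succ_iff_deriv.1 h2).2.2

lemma Wdd1 : ContDiff ℝ 1 (deriv (deriv W)) := by
  have h := Wd2 sol
  have h2 : ContDiff ℝ ((1:ℕ) + 1) (deriv W) := by exact_mod_cast h
  exact (contDiff_succ_iff_deriv.1 h2).2.2

lemma Av1 : ContDiff ℝ 1 (uncurry (Av α ρ μ)) := by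
  apply contDiff_iff_contDiffAt.2
  intro p
  have h1 : ContDiffAt ℝ 1 (fun q : ℝ × ℝ => St ρ μ q.1 q.2 ^ (α-2)) p := by
    apply ContDiffAt.rpow_const_of_ne
    · exact ((S_smooth sol).of_le (by simp)).contDiffAt
    · exact ne_of_gt (S_pos sol p.1 p.2)
  have h2 : ContDiffAt ℝ 1 (fun q : ℝ × ℝ => px (St ρ μ) q.1 q.2) p :=
    (pxS_smooth sol).contDiffAt
  exact (contDiffAt_const.mul h1).mul h2

lemma Gro1 : ContDiff ℝ 1 (uncurry (Gro α V ρ μ)) := by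
  have hρ1 : ContDiff ℝ 1 (uncurry ρ) := sol.smooth_rho.of_le (by simp)
  have hV1 : ContDiff ℝ 1 (fun q : ℝ × ℝ => deriv V q.2) :=
    ((Vd2 sol).of_le (by norm_num)).comp contDiff_snd
  exact (hρ1.mul (Av1 sol)).add (hρ1.mul hV1)

lemma Gmu1 : ContDiff ℝ 1 (uncurry (Gmu α W ρ μ)) := by
  have hμ1 : ContDiff ℝ 1 (uncurry μ) := sol.smooth_mu.of_le (by simp)
  have hW1 : ContDiff ℝ 1 (fun q : ℝ × ℝ => deriv W q.2) :=
    ((Wd2 sol).of_le (by norm_num)).comp contDiff_snd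
  exact (hμ1.mul (Av1 sol)).add (hμ1.mul hW1)

lemma GS1 : ContDiff ℝ 1 (uncurry (GS α V W ρ μ)) := by
  have hρ1 : ContDiff ℝ 1 (uncurry ρ) := sol.smooth_rho.of_le (by simp)
  have hμ1 : ContDiff ℝ 1 (uncurry μ) := sol.smooth_mu.of_le (by simp)
  have hV1 : ContDiff ℝ 1 (fun q : ℝ × ℝ => deriv V q.2) :=
    ((Vd2 sol).of_le (by norm_num)).comp contDiff_snd
  have hW1 : ContDiff ℝ 1 (fun q : ℝ × ℝ => deriv W q.2) :=
    ((Wd2 sol).of_le (by norm_num)).comp contDiff_snd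
  exact (((S_smooth sol).of_le (by simp)).mul (Av1 sol)).add
    ((hρ1.mul hV1).add (hμ1.mul hW1))

lemma pxS_per : ∀ t, Function.Periodic (px (St ρ μ) t) 1 :=
  fun t => periodic_deriv (S_per sol t)

lemma Av_per : ∀ t, Function.Periodic (Av α ρ μ t) 1 := by
  intro t x
  simp only [Av]
  rw [S_per sol t x, pxS_per sol t x]

lemma Vd_per : Function.Periodic (deriv V) 1 := periodic_deriv sol.periodic_V
lemma Wd_per : Function.Periodic (deriv W) 1 := periodic_deriv sol.periodic_W

lemma Gro_per : ∀ t, Function.Periodic (Gro α V ρ μ t) 1 := by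
  intro t x
  simp only [Gro]
  rw [sol.periodic_rho t x, Av_per sol t x, Vd_per sol x]

lemma Gmu_per : ∀ t, Function.Periodic (Gmu α W ρ μ t) 1 := by
  intro t x
  simp only [Gmu]
  rw [sol.periodic_mu t x, Av_per sol t x, Wd_per sol x]

lemma GS_per : ∀ t, Function.Periodic (GS α V W ρ μ t) 1 := by
  intro t x
  simp only [GS]
  rw [sol.periodic_rho t x, sol.periodic_mu t x, S_per sol t x, Av_per sol t x,
    Vd_per sol x, Wd_per sol x]

/-- PDE for ρ in divergence form. -/
lemma pde_rho : ∀ t ∈ Icc (0:ℝ) T, ∀ x, pt ρ t x = deriv (fun y => Gro α V ρ μ t y) x := by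
  intro t ht x
  have h0 : pt ρ t x = px (fun s y => ρ s y * Av α ρ μ s y) t x
      + px (fun s y => ρ s y * deriv V y) t x := sol.eq_rho t ht x
  have hd1 : DifferentiableAt ℝ (fun y => ρ t y * Av α ρ μ t y) x := by
    have := contDiff_sect (f := fun s y => ρ s y * Av α ρ μ s y)
      ((sol.smooth_rho.of_le (by simp) : ContDiff ℝ 1 (uncurry ρ)).mul (Av1 sol)) t
    exact (this.differentiable one_ne_zero) x
  have hd2 : DifferentiableAt ℝ (fun y => ρ t y * deriv V y) x := by
    have := contDiff_sect (f := fun s y => ρ s y * deriv V y)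
      ((sol.smooth_rho.of_le (by simp) : ContDiff ℝ 1 (uncurry ρ)).mul
      (((Vd2 sol).of_le (by norm_num) : ContDiff ℝ 1 (deriv V)).comp contDiff_snd)) t
    exact (this.differentiable one_ne_zero) x
  have hsum := (hd1.hasDerivAt.add hd2.hasDerivAt).deriv
  rw [h0]
  exact hsum.symm

lemma pde_mu : ∀ t ∈ Icc (0:ℝ) T, ∀ x, pt μ t x = deriv (fun y => Gmu α W ρ μ t y) x := by
  intro t ht x
  have h0 : pt μ t x = px (fun s y => μ s y * Av α ρ μ s y) t x
      + px (fun s y => μ s y * deriv W y) t x := sol.eq_mu t ht x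
  have hd1 : DifferentiableAt ℝ (fun y => μ t y * Av α ρ μ t y) x := by
    have := contDiff_sect (f := fun s y => μ s y * Av α ρ μ s y)
      ((sol.smooth_mu.of_le (by simp) : ContDiff ℝ 1 (uncurry μ)).mul (Av1 sol)) t
    exact (this.differentiable one_ne_zero) x
  have hd2 : DifferentiableAt ℝ (fun y => μ t y * deriv W y) x := by
    have := contDiff_sect (f := fun s y => μ s y * deriv W y)
      ((sol.smooth_mu.of_le (by simp) : ContDiff ℝ 1 (uncurry μ)).mul
      (((Wd2 sol).of_le (by norm_num) : ContDiff ℝ 1 (deriv W)).comp contDiff_snd)) t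
    exact (this.differentiable one_ne_zero) x
  have hsum := (hd1.hasDerivAt.add hd2.hasDerivAt).deriv
  rw [h0]
  exact hsum.symm

/-- PDE for `S` in divergence form. -/
lemma pde_S : ∀ t ∈ Icc (0:ℝ) T, ∀ x, pt (St ρ μ) t x = deriv (fun y => GS α V W ρ μ t y) x := by
  intro t ht x
  have hρd : Differentiable ℝ (uncurry ρ) := sol.smooth_rho.differentiable (by simp)
  have hμd : Differentiable ℝ (uncurry μ) := sol.smooth_mu.differentiable (by simp)
  have h1 : pt (St ρ μ) t x = pt ρ t x + pt μ t x := by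
    have := ((hasDerivAt_pt hρd t x).add (hasDerivAt_pt hμd t x)).deriv
    exact this
  rw [h1, pde_rho sol t ht x, pde_mu sol t ht x]
  have hd1 : DifferentiableAt ℝ (fun y => Gro α V ρ μ t y) x :=
    ((contDiff_sect (Gro1 sol) t).differentiable one_ne_zero) x
  have hd2 : DifferentiableAt ℝ (fun y => Gmu α W ρ μ t y) x :=
    ((contDiff_sect (Gmu1 sol) t).differentiable one_ne_zero) x
  have hsum := (hd1.hasDerivAt.add hd2.hasDerivAt).deriv
  rw [← hsum]
  have hfun : (fun y => Gro α V ρ μ t y + Gmu α W ρ μ t y) = fun y => GS α V W ρ μ t y := by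
    funext y
    simp only [Gro, Gmu, GS, St]
    ring
  exact congrArg (fun F => deriv F x) hfun

end Basic

end CDaux
namespace CDaux

open Function intervalIntegral

lemma cont_rpow_comp {X : Type*} [TopologicalSpace X] {g : X → ℝ}
    (hg : Continuous g) (hpos : ∀ x, 0 < g x) (q : ℝ) :
    Continuous fun x => g x ^ q :=
  continuous_iff_continuousAt.2 fun x =>
    hg.continuousAt.rpow_const (Or.inl (ne_of_gt (hpos x)))

lemma ibp_per {u v u' v' : ℝ → ℝ}
    (hu : ∀ x, HasDerivAt u (u' x) x) (hv : ∀ x, HasDerivAt v (v' x) x)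
    (hu' : Continuous u') (hv' : Continuous v')
    (hb : u 1 * v 1 = u 0 * v 0) :
    ∫ x in (0:ℝ)..1, u x * v' x = - ∫ x in (0:ℝ)..1, u' x * v x := by
  have h := intervalIntegral.integral_mul_deriv_eq_deriv_mul
    (fun x _ => hu x) (fun x _ => hv x)
    (hu'.intervalIntegrable 0 1) (hv'.intervalIntegrable 0 1)
  rw [h, hb]
  ring

variable {T α : ℝ} {V W : ℝ → ℝ} {ρ μ : ℝ → ℝ → ℝ}

section Funcs

variable (sol : CrossDiffSol T α V W ρ μ)
include sol

lemma mass_hasDeriv (t₀ : ℝ) :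
    HasDerivAt (fun t => ∫ x in (0:ℝ)..1, St ρ μ t x)
      (∫ x in (0:ℝ)..1, pt (St ρ μ) t₀ x) t₀ := by
  apply hasDerivAt_param_integral (S_smooth sol).continuous
    ((contDiff_pt (n := 1) (S_smooth sol)).continuous)
  intro t x
  exact hasDerivAt_pt ((S_smooth sol).differentiable (by simp)) t x

lemma intS_pt_zero (t : ℝ) (ht : t ∈ Icc (0:ℝ) T) :
    (∫ x in (0:ℝ)..1, pt (St ρ μ) t x) = 0 := by
  have h1 : ∀ x ∈ uIcc (0:ℝ) 1, DifferentiableAt ℝ (fun y => GS α V W ρ μ t y) x :=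
    fun x _ => ((contDiff_sect (GS1 sol) t).differentiable one_ne_zero) x
  have h2 : IntervalIntegrable (deriv (fun y => GS α V W ρ μ t y)) volume 0 1 :=
    ((contDiff_sect (GS1 sol) t).continuous_deriv le_rfl).intervalIntegrable 0 1
  have h3 : (∫ x in (0:ℝ)..1, pt (St ρ μ) t x)
      = ∫ x in (0:ℝ)..1, deriv (fun y => GS α V W ρ μ t y) x := by
    apply intervalIntegral.integral_congr
    intro x _
    exact pde_S sol t ht x
  rw [h3, intervalIntegral.integral_deriv_eq_sub h1 h2]
  have : GS α V W ρ μ t 1 = GS α V W ρ μ t 0 := by simpa using GS_per sol t 0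
  rw [this]
  ring

lemma mass_const (t : ℝ) (ht : t ∈ Icc (0:ℝ) T) :
    (∫ x in (0:ℝ)..1, St ρ μ t x) = ∫ x in (0:ℝ)..1, St ρ μ 0 x := by
  set m : ℝ → ℝ := fun t => ∫ x in (0:ℝ)..1, St ρ μ t x with hm
  have hmd : ∀ s, HasDerivAt m (∫ x in (0:ℝ)..1, pt (St ρ μ) s x) s := mass_hasDeriv sol
  have hcont : ContinuousOn m (Icc 0 T) :=
    (Differentiable.continuous (fun s => (hmd s).differentiableAt)).continuousOn
  have hdiff : DifferentiableOn ℝ m (interior (Icc 0 T)) :=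
    fun s _ => (hmd s).differentiableAt.differentiableWithinAt
  have hder0 : ∀ s ∈ interior (Icc 0 T), deriv m s = 0 := by
    intro s hs
    rw [interior_Icc] at hs
    rw [(hmd s).deriv]
    exact intS_pt_zero sol s ⟨hs.1.le, hs.2.le⟩
  have hmono : MonotoneOn m (Icc 0 T) :=
    monotoneOn_of_deriv_nonneg (convex_Icc 0 T) hcont hdiff
      (fun s hs => ge_of_eq (hder0 s hs))
  have hanti : AntitoneOn m (Icc 0 T) :=
    antitoneOn_of_deriv_nonpos (convex_Icc 0 T) hcont hdiff
      (fun s hs => le_of_eq (hder0 s hs))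
  have h0 : (0:ℝ) ∈ Icc (0:ℝ) T := ⟨le_refl 0, ht.1.trans ht.2⟩
  exact le_antisymm (hanti h0 ht ht.1) (hmono h0 ht ht.1)

lemma boltz_rho_ibp (t : ℝ) (ht : t ∈ Icc (0:ℝ) T) :
    (∫ x in (0:ℝ)..1, (Real.log (ρ t x) + 1) * pt ρ t x)
      = - ∫ x in (0:ℝ)..1, px ρ t x * (Av α ρ μ t x + deriv V x) := by
  have hρd : Differentiable ℝ (uncurry ρ) := sol.smooth_rho.differentiable (by simp)
  have hu : ∀ x, HasDerivAt (fun y => Real.log (ρ t y) + 1)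
      (px ρ t x / ρ t x) x := by
    intro x
    exact ((hasDerivAt_px hρd t x).log (ne_of_gt (sol.pos_rho t x))).add_const 1
  have hv : ∀ x, HasDerivAt (fun y => Gro α V ρ μ t y)
      (deriv (fun y => Gro α V ρ μ t y) x) x :=
    fun x => (((contDiff_sect (Gro1 sol) t).differentiable one_ne_zero) x).hasDerivAt
  have hu' : Continuous fun x => px ρ t x / ρ t x := by
    apply Continuous.div
    · exact (contDiff_sect (contDiff_px (n := 1) sol.smooth_rho) t).continuous
    · exact (contDiff_sect (sol.smooth_rho.of_le (by exact_mod_cast le_top : (1:WithTop ℕ∞) ≤ ((⊤ : ℕ∞) : WithTop ℕ∞))) t).continuous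
    · exact fun x => ne_of_gt (sol.pos_rho t x)
  have hv' : Continuous (deriv (fun y => Gro α V ρ μ t y)) :=
    (contDiff_sect (Gro1 sol) t).continuous_deriv le_rfl
  have hb : (Real.log (ρ t 1) + 1) * Gro α V ρ μ t 1
      = (Real.log (ρ t 0) + 1) * Gro α V ρ μ t 0 := by
    have h1 : ρ t 1 = ρ t 0 := by simpa using sol.periodic_rho t 0
    have h2 : Gro α V ρ μ t 1 = Gro α V ρ μ t 0 := by simpa using Gro_per sol t 0
    rw [h1, h2]
  have step1 : (∫ x in (0:ℝ)..1, (Real.log (ρ t x) + 1) * pt ρ t x)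
      = ∫ x in (0:ℝ)..1, (Real.log (ρ t x) + 1) * deriv (fun y => Gro α V ρ μ t y) x := by
    apply intervalIntegral.integral_congr
    intro x _
    dsimp only
    rw [pde_rho sol t ht x]
  have step2 := ibp_per hu hv hu' hv' hb
  rw [step1, step2]
  congr 1
  apply intervalIntegral.integral_congr
  intro x _
  have hρ0 : ρ t x ≠ 0 := ne_of_gt (sol.pos_rho t x)
  simp only [Gro]
  field_simp

lemma boltz_mu_ibp (t : ℝ) (ht : t ∈ Icc (0:ℝ) T) :
    (∫ x in (0:ℝ)..1, (Real.log (μ t x) + 1) * pt μ t x)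
      = - ∫ x in (0:ℝ)..1, px μ t x * (Av α ρ μ t x + deriv W x) := by
  have hμd : Differentiable ℝ (uncurry μ) := sol.smooth_mu.differentiable (by simp)
  have hu : ∀ x, HasDerivAt (fun y => Real.log (μ t y) + 1)
      (px μ t x / μ t x) x := by
    intro x
    exact ((hasDerivAt_px hμd t x).log (ne_of_gt (sol.pos_mu t x))).add_const 1
  have hv : ∀ x, HasDerivAt (fun y => Gmu α W ρ μ t y)
      (deriv (fun y => Gmu α W ρ μ t y) x) x :=
    fun x => (((contDiff_sect (Gmu1 sol) t).differentiable one_ne_zero) x).hasDerivAt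
  have hu' : Continuous fun x => px μ t x / μ t x := by
    apply Continuous.div
    · exact (contDiff_sect (contDiff_px (n := 1) sol.smooth_mu) t).continuous
    · exact (contDiff_sect (sol.smooth_mu.of_le (by exact_mod_cast le_top : (1:WithTop ℕ∞) ≤ ((⊤ : ℕ∞) : WithTop ℕ∞))) t).continuous
    · exact fun x => ne_of_gt (sol.pos_mu t x)
  have hv' : Continuous (deriv (fun y => Gmu α W ρ μ t y)) :=
    (contDiff_sect (Gmu1 sol) t).continuous_deriv le_rfl
  have hb : (Real.log (μ t 1) + 1) * Gmu α W ρ μ t 1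
      = (Real.log (μ t 0) + 1) * Gmu α W ρ μ t 0 := by
    have h1 : μ t 1 = μ t 0 := by simpa using sol.periodic_mu t 0
    have h2 : Gmu α W ρ μ t 1 = Gmu α W ρ μ t 0 := by simpa using Gmu_per sol t 0
    rw [h1, h2]
  have step1 : (∫ x in (0:ℝ)..1, (Real.log (μ t x) + 1) * pt μ t x)
      = ∫ x in (0:ℝ)..1, (Real.log (μ t x) + 1) * deriv (fun y => Gmu α W ρ μ t y) x := by
    apply intervalIntegral.integral_congr
    intro x _
    dsimp only
    rw [pde_mu sol t ht x]
  have step2 := ibp_per hu hv hu' hv' hb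
  rw [step1, step2]
  congr 1
  apply intervalIntegral.integral_congr
  intro x _
  have hμ0 : μ t x ≠ 0 := ne_of_gt (sol.pos_mu t x)
  simp only [Gmu]
  field_simp

lemma psi_ibp (hα : 0 < α) (hα1 : α < 1) (t : ℝ) (ht : t ∈ Icc (0:ℝ) T) :
    (∫ x in (0:ℝ)..1, psiF' α (St ρ μ t x) * pt (St ρ μ) t x)
      = - ∫ x in (0:ℝ)..1,
          (psiF'' α (St ρ μ t x) * px (St ρ μ) t x) * GS α V W ρ μ t x := by
  have hSd : Differentiable ℝ (uncurry (St ρ μ)) := (S_smooth sol).differentiable (by simp)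
  have hu : ∀ x, HasDerivAt (fun y => psiF' α (St ρ μ t y))
      (psiF'' α (St ρ μ t x) * px (St ρ μ) t x) x := by
    intro x
    exact (psiF'_hasDeriv hα hα1 (S_pos sol t x)).comp x (hasDerivAt_px hSd t x)
  have hv : ∀ x, HasDerivAt (fun y => GS α V W ρ μ t y)
      (deriv (fun y => GS α V W ρ μ t y) x) x :=
    fun x => (((contDiff_sect (GS1 sol) t).differentiable one_ne_zero) x).hasDerivAt
  have hSc : Continuous (St ρ μ t) :=
    (contDiff_sect ((S_smooth sol).of_le (by exact_mod_cast le_top : (1:WithTop ℕ∞) ≤ ((⊤ : ℕ∞) : WithTop ℕ∞))) t).continuous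
  have hpxSc : Continuous (px (St ρ μ) t) :=
    (contDiff_sect (pxS_smooth (n := 1) sol) t).continuous
  have hu' : Continuous fun x => psiF'' α (St ρ μ t x) * px (St ρ μ) t x := by
    have c1 : Continuous fun x => St ρ μ t x ^ (-1-α) := cont_rpow_comp hSc (S_pos sol t) _
    have c2 : Continuous fun x => (St ρ μ t x + 4) ^ (-1-α) :=
      cont_rpow_comp (hSc.add continuous_const)
        (fun x => by have := S_pos sol t x; simp only [Pi.add_apply]; linarith) _
    have c3 : Continuous fun x => (St ρ μ t x + 8) ^ (-1-α) :=
      cont_rpow_comp (hSc.add continuous_const)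
        (fun x => by have := S_pos sol t x; simp only [Pi.add_apply]; linarith) _
    have hpsiS : Continuous fun x => psiF'' α (St ρ μ t x) := by
      unfold psiF''
      exact (c1.sub (continuous_const.mul c2)).add c3
    exact hpsiS.mul hpxSc
  have hv' : Continuous (deriv (fun y => GS α V W ρ μ t y)) :=
    (contDiff_sect (GS1 sol) t).continuous_deriv le_rfl
  have hb : psiF' α (St ρ μ t 1) * GS α V W ρ μ t 1
      = psiF' α (St ρ μ t 0) * GS α V W ρ μ t 0 := by
    have h1 : St ρ μ t 1 = St ρ μ t 0 := by simpa using S_per sol t 0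
    have h2 : GS α V W ρ μ t 1 = GS α V W ρ μ t 0 := by simpa using GS_per sol t 0
    rw [h1, h2]
  have step1 : (∫ x in (0:ℝ)..1, psiF' α (St ρ μ t x) * pt (St ρ μ) t x)
      = ∫ x in (0:ℝ)..1, psiF' α (St ρ μ t x) * deriv (fun y => GS α V W ρ μ t y) x := by
    apply intervalIntegral.integral_congr
    intro x _
    dsimp only
    rw [pde_S sol t ht x]
  rw [step1, ibp_per hu hv hu' hv' hb]

lemma drift_rho_ibp (t : ℝ) :
    (∫ x in (0:ℝ)..1, deriv V x * px ρ t x)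
      = - ∫ x in (0:ℝ)..1, deriv (deriv V) x * ρ t x := by
  have hρd : Differentiable ℝ (uncurry ρ) := sol.smooth_rho.differentiable (by simp)
  have hu : ∀ x, HasDerivAt (deriv V) (deriv (deriv V) x) x :=
    fun x => (((Vd2 sol).differentiable (by norm_num)) x).hasDerivAt
  have hv : ∀ x, HasDerivAt (fun y => ρ t y) (px ρ t x) x := hasDerivAt_px hρd t
  have hu' : Continuous (deriv (deriv V)) := (Vdd1 sol).continuous
  have hv' : Continuous (px ρ t) := (contDiff_sect (contDiff_px (n := 1) sol.smooth_rho) t).continuous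
  have hb : deriv V 1 * ρ t 1 = deriv V 0 * ρ t 0 := by
    have h1 : ρ t 1 = ρ t 0 := by simpa using sol.periodic_rho t 0
    have h2 : deriv V 1 = deriv V 0 := by simpa using Vd_per sol 0
    rw [h1, h2]
  exact ibp_per hu hv hu' hv' hb

lemma drift_mu_ibp (t : ℝ) :
    (∫ x in (0:ℝ)..1, deriv W x * px μ t x)
      = - ∫ x in (0:ℝ)..1, deriv (deriv W) x * μ t x := by
  have hμd : Differentiable ℝ (uncurry μ) := sol.smooth_mu.differentiable (by simp)
  have hu : ∀ x, HasDerivAt (deriv W) (deriv (deriv W) x) x :=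
    fun x => (((Wd2 sol).differentiable (by norm_num)) x).hasDerivAt
  have hv : ∀ x, HasDerivAt (fun y => μ t y) (px μ t x) x := hasDerivAt_px hμd t
  have hu' : Continuous (deriv (deriv W)) := (Wdd1 sol).continuous
  have hv' : Continuous (px μ t) := (contDiff_sect (contDiff_px (n := 1) sol.smooth_mu) t).continuous
  have hb : deriv W 1 * μ t 1 = deriv W 0 * μ t 0 := by
    have h1 : μ t 1 = μ t 0 := by simpa using sol.periodic_mu t 0
    have h2 : deriv W 1 = deriv W 0 := by simpa using Wd_per sol 0
    rw [h1, h2]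
  exact ibp_per hu hv hu' hv' hb

end Funcs

end CDaux
namespace CDaux

open Function intervalIntegral

lemma mul_log_ge {u : ℝ} (hu : 0 < u) : u - 1 ≤ u * Real.log u := by
  have h := Real.log_le_sub_one_of_pos (show (0:ℝ) < u⁻¹ by positivity)
  rw [Real.log_inv] at h
  have h2 : 1 - u⁻¹ ≤ Real.log u := by linarith
  have h3 := mul_le_mul_of_nonneg_left h2 hu.le
  have h4 : u * (1 - u⁻¹) = u - 1 := by field_simp
  linarith [h3, h4.symm.le]

lemma young_step {α X Y S c u K : ℝ} (hα : 0 < α) (hX : 0 < X) (hc : 0 ≤ c)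
    (hXY : X * Y = S^2) :
    K * c * S * |u| ≤ (α/2) * (X*c*u^2) + (K^2/(2*α)) * (Y*c) := by
  have h2αX : 0 < 2*α*X := by positivity
  have h1 : 0 ≤ c * (α*X*|u| - K*S)^2 := mul_nonneg hc (sq_nonneg _)
  have hu2 : |u|^2 = u^2 := sq_abs u
  have hbig : (2*α*X) * (K * c * S * |u|)
      ≤ (2*α*X) * ((α/2) * (X*c*u^2) + (K^2/(2*α)) * (Y*c)) := by
    have hexp : (2*α*X) * ((α/2) * (X*c*u^2) + (K^2/(2*α)) * (Y*c))
        = α^2*X^2*c*u^2 + K^2*(X*Y)*c := by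
      field_simp
    have hexpand : c * (α*X*|u| - K*S)^2
        = α^2*X^2*c*u^2 - 2*α*X*(K*c*S*|u|) + K^2*S^2*c := by
      rw [← hu2]; ring
    rw [hexpand] at h1
    rw [hexp, hXY]
    linarith
  exact le_of_mul_le_mul_left hbig h2αX

variable {T α M E B K : ℝ} {V W : ℝ → ℝ} {ρ μ : ℝ → ℝ → ℝ}

section Funcs2

variable (sol : CrossDiffSol T α V W ρ μ)
include sol

lemma rho_cont : Continuous (uncurry ρ) := sol.smooth_rho.continuous
lemma mu_cont : Continuous (uncurry μ) := sol.smooth_mu.continuous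
lemma ptrho_cont : Continuous (uncurry (pt ρ)) := (contDiff_pt (n := 1) sol.smooth_rho).continuous
lemma ptmu_cont : Continuous (uncurry (pt μ)) := (contDiff_pt (n := 1) sol.smooth_mu).continuous

lemma boltz_hasDeriv (t₀ : ℝ) :
    HasDerivAt (fun t => ∫ x in (0:ℝ)..1,
        (ρ t x * Real.log (ρ t x) + μ t x * Real.log (μ t x)))
      (∫ x in (0:ℝ)..1,
        ((Real.log (ρ t₀ x) + 1) * pt ρ t₀ x + (Real.log (μ t₀ x) + 1) * pt μ t₀ x)) t₀ := by
  apply hasDerivAt_param_integral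
    (F := fun t x => ρ t x * Real.log (ρ t x) + μ t x * Real.log (μ t x))
    (F' := fun t x => (Real.log (ρ t x) + 1) * pt ρ t x + (Real.log (μ t x) + 1) * pt μ t x)
  · have h1 : Continuous fun p : ℝ × ℝ => ρ p.1 p.2 := rho_cont sol
    have h2 : Continuous fun p : ℝ × ℝ => μ p.1 p.2 := mu_cont sol
    exact (h1.mul (h1.log fun p => ne_of_gt (sol.pos_rho p.1 p.2))).add
      (h2.mul (h2.log fun p => ne_of_gt (sol.pos_mu p.1 p.2)))
  · have h1 : Continuous fun p : ℝ × ℝ => ρ p.1 p.2 := rho_cont sol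
    have h2 : Continuous fun p : ℝ × ℝ => μ p.1 p.2 := mu_cont sol
    have h3 : Continuous fun p : ℝ × ℝ => pt ρ p.1 p.2 := ptrho_cont sol
    have h4 : Continuous fun p : ℝ × ℝ => pt μ p.1 p.2 := ptmu_cont sol
    exact (((h1.log fun p => ne_of_gt (sol.pos_rho p.1 p.2)).add continuous_const).mul h3).add
      (((h2.log fun p => ne_of_gt (sol.pos_mu p.1 p.2)).add continuous_const).mul h4)
  · intro t x
    have hρd : Differentiable ℝ (uncurry ρ) := sol.smooth_rho.differentiable (by simp)
    have hμd : Differentiable ℝ (uncurry μ) := sol.smooth_mu.differentiable (by simp)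
    have hρt := hasDerivAt_pt hρd t x
    have hμt := hasDerivAt_pt hμd t x
    have hρ0 : ρ t x ≠ 0 := ne_of_gt (sol.pos_rho t x)
    have hμ0 : μ t x ≠ 0 := ne_of_gt (sol.pos_mu t x)
    have h1 := hρt.mul (hρt.log hρ0)
    have h2 := hμt.mul (hμt.log hμ0)
    refine (h1.add h2).congr_deriv (Eq.symm ?_)
    field_simp

lemma pxS_add (t x : ℝ) : px (St ρ μ) t x = px ρ t x + px μ t x := by
  have hρd : Differentiable ℝ (uncurry ρ) := sol.smooth_rho.differentiable (by simp)
  have hμd : Differentiable ℝ (uncurry μ) := sol.smooth_mu.differentiable (by simp)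
  exact ((hasDerivAt_px hρd t x).add (hasDerivAt_px hμd t x)).deriv

lemma boltz_deriv_bound (hα : 0 < α) (db : DataBounds V W ρ μ M E B K)
    (t : ℝ) (ht : t ∈ Icc (0:ℝ) T) :
    (∫ x in (0:ℝ)..1,
        ((Real.log (ρ t x) + 1) * pt ρ t x + (Real.log (μ t x) + 1) * pt μ t x))
      ≤ -(α * ∫ x in (0:ℝ)..1, St ρ μ t x ^ (α-2) * px (St ρ μ) t x ^ 2) + K * M := by
  -- continuity of sections
  have hρc : Continuous (ρ t) := (contDiff_sect (sol.smooth_rho.of_le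
    (by exact_mod_cast le_top : (1:WithTop ℕ∞) ≤ ((⊤ : ℕ∞) : WithTop ℕ∞))) t).continuous
  have hμc : Continuous (μ t) := (contDiff_sect (sol.smooth_mu.of_le
    (by exact_mod_cast le_top : (1:WithTop ℕ∞) ≤ ((⊤ : ℕ∞) : WithTop ℕ∞))) t).continuous
  have hptρc : Continuous (pt ρ t) := (contDiff_sect (contDiff_pt (n := 1) sol.smooth_rho) t).continuous
  have hptμc : Continuous (pt μ t) := (contDiff_sect (contDiff_pt (n := 1) sol.smooth_mu) t).continuous
  have hpxρc : Continuous (px ρ t) := (contDiff_sect (contDiff_px (n := 1) sol.smooth_rho) t).continuous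
  have hpxμc : Continuous (px μ t) := (contDiff_sect (contDiff_px (n := 1) sol.smooth_mu) t).continuous
  have hAvc : Continuous (Av α ρ μ t) := (contDiff_sect (Av1 sol) t).continuous
  have hV'c : Continuous (deriv V) := (Vd2 sol).continuous
  have hW'c : Continuous (deriv W) := (Wd2 sol).continuous
  have hV''c : Continuous (deriv (deriv V)) := (Vdd1 sol).continuous
  have hW''c : Continuous (deriv (deriv W)) := (Wdd1 sol).continuous
  have hρlc : Continuous fun x => Real.log (ρ t x) + 1 :=
    (hρc.log fun x => ne_of_gt (sol.pos_rho t x)).add continuous_const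
  have hμlc : Continuous fun x => Real.log (μ t x) + 1 :=
    (hμc.log fun x => ne_of_gt (sol.pos_mu t x)).add continuous_const
  -- split
  have hsplit : (∫ x in (0:ℝ)..1,
      ((Real.log (ρ t x) + 1) * pt ρ t x + (Real.log (μ t x) + 1) * pt μ t x))
      = (∫ x in (0:ℝ)..1, (Real.log (ρ t x) + 1) * pt ρ t x)
        + ∫ x in (0:ℝ)..1, (Real.log (μ t x) + 1) * pt μ t x :=
    intervalIntegral.integral_add ((hρlc.mul hptρc).intervalIntegrable 0 1)
      ((hμlc.mul hptμc).intervalIntegrable 0 1)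
  rw [hsplit, boltz_rho_ibp sol t ht, boltz_mu_ibp sol t ht]
  -- rewrite each integral
  have hsplitρ : (∫ x in (0:ℝ)..1, px ρ t x * (Av α ρ μ t x + deriv V x))
      = (∫ x in (0:ℝ)..1, px ρ t x * Av α ρ μ t x)
        + ∫ x in (0:ℝ)..1, deriv V x * px ρ t x := by
    rw [← intervalIntegral.integral_add (f := fun x => px ρ t x * Av α ρ μ t x)
      (g := fun x => deriv V x * px ρ t x) ((hpxρc.mul hAvc).intervalIntegrable 0 1)
      ((hV'c.mul hpxρc).intervalIntegrable 0 1)]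
    apply intervalIntegral.integral_congr
    intro x _
    dsimp only
    ring
  have hsplitμ : (∫ x in (0:ℝ)..1, px μ t x * (Av α ρ μ t x + deriv W x))
      = (∫ x in (0:ℝ)..1, px μ t x * Av α ρ μ t x)
        + ∫ x in (0:ℝ)..1, deriv W x * px μ t x := by
    rw [← intervalIntegral.integral_add (f := fun x => px μ t x * Av α ρ μ t x)
      (g := fun x => deriv W x * px μ t x) ((hpxμc.mul hAvc).intervalIntegrable 0 1)
      ((hW'c.mul hpxμc).intervalIntegrable 0 1)]
    apply intervalIntegral.integral_congr
    intro x _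
    dsimp only
    ring
  rw [hsplitρ, hsplitμ, drift_rho_ibp sol t, drift_mu_ibp sol t]
  -- combine the Av terms
  have hcombine : (∫ x in (0:ℝ)..1, px ρ t x * Av α ρ μ t x)
      + (∫ x in (0:ℝ)..1, px μ t x * Av α ρ μ t x)
      = α * ∫ x in (0:ℝ)..1, St ρ μ t x ^ (α-2) * px (St ρ μ) t x ^ 2 := by
    rw [← intervalIntegral.integral_add (f := fun x => px ρ t x * Av α ρ μ t x)
      (g := fun x => px μ t x * Av α ρ μ t x) ((hpxρc.mul hAvc).intervalIntegrable 0 1)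
      ((hpxμc.mul hAvc).intervalIntegrable 0 1),
      ← intervalIntegral.integral_const_mul]
    apply intervalIntegral.integral_congr
    intro x _
    dsimp only
    simp only [Av]
    rw [pxS_add sol t x]
    ring
  -- drift bound
  have hdrift : (∫ x in (0:ℝ)..1, deriv (deriv V) x * ρ t x)
      + (∫ x in (0:ℝ)..1, deriv (deriv W) x * μ t x) ≤ K * M := by
    have hsum : (∫ x in (0:ℝ)..1, deriv (deriv V) x * ρ t x)
        + (∫ x in (0:ℝ)..1, deriv (deriv W) x * μ t x)
        = ∫ x in (0:ℝ)..1, (deriv (deriv V) x * ρ t x + deriv (deriv W) x * μ t x) :=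
      (intervalIntegral.integral_add ((hV''c.mul hρc).intervalIntegrable 0 1)
        ((hW''c.mul hμc).intervalIntegrable 0 1)).symm
    rw [hsum]
    have hmono : (∫ x in (0:ℝ)..1, (deriv (deriv V) x * ρ t x + deriv (deriv W) x * μ t x))
        ≤ ∫ x in (0:ℝ)..1, K * St ρ μ t x := by
      apply intervalIntegral.integral_mono_on (by norm_num)
      · exact ((hV''c.mul hρc).add (hW''c.mul hμc)).intervalIntegrable 0 1
      · exact (continuous_const.mul ((contDiff_sect ((S_smooth sol).of_le (by exact_mod_cast le_top : (1:WithTop ℕ∞) ≤ ((⊤ : ℕ∞) : WithTop ℕ∞))) t).continuous)).intervalIntegrable 0 1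
      · intro x _
        have h1 : deriv (deriv V) x * ρ t x ≤ K * ρ t x :=
          mul_le_mul_of_nonneg_right ((le_abs_self _).trans (db.normV x).2.2.1)
            (sol.pos_rho t x).le
        have h2 : deriv (deriv W) x * μ t x ≤ K * μ t x :=
          mul_le_mul_of_nonneg_right ((le_abs_self _).trans (db.normW x).2.2.1)
            (sol.pos_mu t x).le
        simp only [St]
        nlinarith [h1, h2]
    have hmass : (∫ x in (0:ℝ)..1, K * St ρ μ t x) ≤ K * M := by
      rw [intervalIntegral.integral_const_mul, mass_const sol t ht]
      have hK : 0 ≤ K := le_trans (abs_nonneg _) ((db.normV 0).1)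
      have hM : (∫ x in (0:ℝ)..1, St ρ μ 0 x) ≤ M := db.mass
      exact mul_le_mul_of_nonneg_left hM hK
    linarith
  linarith [hcombine, hdrift]

end Funcs2

end CDaux
namespace CDaux

open Function intervalIntegral

lemma psi_pointwise {α S u F K : ℝ} (hα : 0 < α) (hα1 : α < 1) (hS : 0 < S)
    (hF : |F| ≤ K * S) :
    -(psiF'' α S * u * (S * (α * S ^ (α-2) * u) + F))
      ≤ -((α/2) * (S ^ (α-1) * psiF'' α S * u^2)) + (4*K^2/α) * (1+S) := by
  have hc := psiF''_nonneg hα hS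
  have hX : 0 < S ^ (α-1) := Real.rpow_pos_of_pos hS _
  have hZS : S ^ (α-2) * S = S ^ (α-1) := by
    rw [← Real.rpow_add_one (ne_of_gt hS) (α-2)]
    congr 1
    ring
  have hXY : S ^ (α-1) * S ^ (3-α) = S^2 := by
    rw [← Real.rpow_add hS]
    have h2 : (α-1) + (3-α) = (2:ℝ) := by ring
    rw [h2, Real.rpow_two]
  have hyoung := young_step (α := α) (u := u) (K := K) hα hX hc hXY
  have hup : S ^ (3-α) * psiF'' α S ≤ 8*(1+S) := psiF''_upper hα hα1 hS
  have hcross : -(psiF'' α S * u * F) ≤ K * psiF'' α S * S * |u| := by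
    have h1 : -(psiF'' α S * u * F) ≤ |psiF'' α S * u * F| := neg_le_abs _
    rw [abs_mul, abs_mul, abs_of_nonneg hc] at h1
    nlinarith [h1, mul_le_mul_of_nonneg_left hF (mul_nonneg hc (abs_nonneg u))]
  have hmain : -(psiF'' α S * u * (S * (α * S ^ (α-2) * u) + F))
      = -(α * (S ^ (α-1) * psiF'' α S * u^2)) - psiF'' α S * u * F := by
    rw [← hZS]
    ring
  have hY8 : (K^2/(2*α)) * (S ^ (3-α) * psiF'' α S) ≤ (K^2/(2*α)) * (8*(1+S)) :=
    mul_le_mul_of_nonneg_left hup (by positivity)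
  have heq2 : (K^2/(2*α)) * (8*(1+S)) = (4*K^2/α)*(1+S) := by
    field_simp
    ring
  have hPP : α * (S ^ (α-1) * psiF'' α S * u^2)
      = 2*((α/2) * (S ^ (α-1) * psiF'' α S * u^2)) := by ring
  rw [hmain]
  linarith [hcross, hyoung, hY8, heq2.le, heq2.ge, hPP.le, hPP.ge]

lemma final_pointwise {α S u : ℝ} (hα : 0 < α) (hα1 : α < 1) (hS : 0 < S) :
    (u/S)^2 ≤ S ^ (α-2) * u^2 + 2*(S ^ (α-1) * psiF'' α S * u^2) := by
  have hu2 : (0:ℝ) ≤ u^2 := sq_nonneg u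
  have hc := psiF''_nonneg hα hS
  have hX : (0:ℝ) ≤ S ^ (α-1) := (Real.rpow_pos_of_pos hS _).le
  have hdiv : (u/S)^2 = S ^ (-2:ℝ) * u^2 := by
    rw [div_pow, Real.rpow_neg hS.le, Real.rpow_two]
    field_simp
  rw [hdiv]
  rcases le_or_gt 1 S with h1 | h1
  · have hmono : S ^ (-2:ℝ) ≤ S ^ (α-2) :=
      Real.rpow_le_rpow_of_exponent_le h1 (by linarith)
    nlinarith [mul_le_mul_of_nonneg_right hmono hu2,
      mul_nonneg (mul_nonneg hX hc) hu2]
  · have hlow := psiF''_lower hα hS h1.le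
    have hkey : S ^ (-2:ℝ) ≤ 2 * (S ^ (α-1) * psiF'' α S) := by
      have hprod : S ^ (α-1) * (S ^ (-1-α) / 2) = S ^ (-2:ℝ) / 2 := by
        rw [mul_div_assoc', ← Real.rpow_add hS]
        congr 2
        ring
      have h2 := mul_le_mul_of_nonneg_left hlow hX
      rw [hprod] at h2
      linarith
    have h3 := mul_le_mul_of_nonneg_right hkey hu2
    have h4 : (0:ℝ) ≤ S ^ (α-2) * u^2 :=
      mul_nonneg (Real.rpow_pos_of_pos hS _).le hu2
    nlinarith [h3, h4]

variable {T α M E B K : ℝ} {V W : ℝ → ℝ} {ρ μ : ℝ → ℝ → ℝ}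

section Funcs3

variable (sol : CrossDiffSol T α V W ρ μ)
include sol

lemma S_uc : Continuous fun p : ℝ × ℝ => St ρ μ p.1 p.2 := (S_smooth sol).continuous
lemma pxS_uc : Continuous fun p : ℝ × ℝ => px (St ρ μ) p.1 p.2 :=
  (pxS_smooth (n := 1) sol).continuous
lemma ptS_uc : Continuous fun p : ℝ × ℝ => pt (St ρ μ) p.1 p.2 :=
  (contDiff_pt (n := 1) (S_smooth sol)).continuous

lemma psiS''_uc (hα : 0 < α) : Continuous fun p : ℝ × ℝ => psiF'' α (St ρ μ p.1 p.2) := by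
  have hSc := S_uc sol
  have c1 : Continuous fun p : ℝ × ℝ => St ρ μ p.1 p.2 ^ (-1-α) :=
    cont_rpow_comp hSc (fun p => S_pos sol p.1 p.2) _
  have c2 : Continuous fun p : ℝ × ℝ => (St ρ μ p.1 p.2 + 4) ^ (-1-α) :=
    cont_rpow_comp (hSc.add continuous_const)
      (fun p => by have := S_pos sol p.1 p.2; simp only [Pi.add_apply]; linarith) _
  have c3 : Continuous fun p : ℝ × ℝ => (St ρ μ p.1 p.2 + 8) ^ (-1-α) :=
    cont_rpow_comp (hSc.add continuous_const)
      (fun p => by have := S_pos sol p.1 p.2; simp only [Pi.add_apply]; linarith) _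
  unfold psiF''
  exact (c1.sub (continuous_const.mul c2)).add c3

lemma psiS'_uc (hα : 0 < α) : Continuous fun p : ℝ × ℝ => psiF' α (St ρ μ p.1 p.2) := by
  have hSc := S_uc sol
  have c1 : Continuous fun p : ℝ × ℝ => St ρ μ p.1 p.2 ^ (-α) :=
    cont_rpow_comp hSc (fun p => S_pos sol p.1 p.2) _
  have c2 : Continuous fun p : ℝ × ℝ => (St ρ μ p.1 p.2 + 4) ^ (-α) :=
    cont_rpow_comp (hSc.add continuous_const)
      (fun p => by have := S_pos sol p.1 p.2; simp only [Pi.add_apply]; linarith) _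
  have c3 : Continuous fun p : ℝ × ℝ => (St ρ μ p.1 p.2 + 8) ^ (-α) :=
    cont_rpow_comp (hSc.add continuous_const)
      (fun p => by have := S_pos sol p.1 p.2; simp only [Pi.add_apply]; linarith) _
  unfold psiF'
  exact (((c1.neg.add (continuous_const.mul c2)).sub c3)).div_const α

lemma psiS_uc (hα : 0 < α) : Continuous fun p : ℝ × ℝ => psiF α (St ρ μ p.1 p.2) := by
  have hSc := S_uc sol
  have c1 : Continuous fun p : ℝ × ℝ => St ρ μ p.1 p.2 ^ (1-α) :=
    cont_rpow_comp hSc (fun p => S_pos sol p.1 p.2) _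
  have c2 : Continuous fun p : ℝ × ℝ => (St ρ μ p.1 p.2 + 4) ^ (1-α) :=
    cont_rpow_comp (hSc.add continuous_const)
      (fun p => by have := S_pos sol p.1 p.2; simp only [Pi.add_apply]; linarith) _
  have c3 : Continuous fun p : ℝ × ℝ => (St ρ μ p.1 p.2 + 8) ^ (1-α) :=
    cont_rpow_comp (hSc.add continuous_const)
      (fun p => by have := S_pos sol p.1 p.2; simp only [Pi.add_apply]; linarith) _
  unfold psiF
  exact (((c1.neg.add (continuous_const.mul c2)).sub c3)).div_const (α*(1-α))

lemma psi_hasDeriv_t (hα : 0 < α) (hα1 : α < 1) (t₀ : ℝ) :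
    HasDerivAt (fun t => ∫ x in (0:ℝ)..1, psiF α (St ρ μ t x))
      (∫ x in (0:ℝ)..1, psiF' α (St ρ μ t₀ x) * pt (St ρ μ) t₀ x) t₀ := by
  apply hasDerivAt_param_integral
    (F := fun t x => psiF α (St ρ μ t x))
    (F' := fun t x => psiF' α (St ρ μ t x) * pt (St ρ μ) t x)
    (psiS_uc sol hα) ((psiS'_uc sol hα).mul (ptS_uc sol))
  intro t x
  have hSd : Differentiable ℝ (uncurry (St ρ μ)) := (S_smooth sol).differentiable (by simp)
  exact (psiF_hasDeriv hα hα1 (S_pos sol t x)).comp t (hasDerivAt_pt hSd t x)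

lemma psi_deriv_bound (hα : 0 < α) (hα1 : α < 1) (db : DataBounds V W ρ μ M E B K)
    (t : ℝ) (ht : t ∈ Icc (0:ℝ) T) :
    (∫ x in (0:ℝ)..1, psiF' α (St ρ μ t x) * pt (St ρ μ) t x)
      ≤ -((α/2) * ∫ x in (0:ℝ)..1,
          St ρ μ t x ^ (α-1) * psiF'' α (St ρ μ t x) * px (St ρ μ) t x ^ 2)
        + (4*K^2/α)*(1+M) := by
  have hK : 0 ≤ K := le_trans (abs_nonneg _) ((db.normV 0).1)
  -- continuity of sections
  have hSc : Continuous (St ρ μ t) :=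
    (contDiff_sect ((S_smooth sol).of_le (by exact_mod_cast le_top : (1:WithTop ℕ∞) ≤ ((⊤ : ℕ∞) : WithTop ℕ∞))) t).continuous
  have hpxSc : Continuous (px (St ρ μ) t) := (contDiff_sect (pxS_smooth (n := 1) sol) t).continuous
  have hpsi''c : Continuous fun x => psiF'' α (St ρ μ t x) :=
    (psiS''_uc sol hα).comp (Continuous.prodMk_right t)
  have hGSc : Continuous (GS α V W ρ μ t) := (contDiff_sect (GS1 sol) t).continuous
  have hXrc : Continuous fun x => St ρ μ t x ^ (α-1) :=
    cont_rpow_comp hSc (S_pos sol t) _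
  rw [psi_ibp sol hα hα1 t ht]
  have hneg : (- ∫ x in (0:ℝ)..1, (psiF'' α (St ρ μ t x) * px (St ρ μ) t x) * GS α V W ρ μ t x)
      = ∫ x in (0:ℝ)..1, -((psiF'' α (St ρ μ t x) * px (St ρ μ) t x) * GS α V W ρ μ t x) := by
    rw [intervalIntegral.integral_neg]
  rw [hneg]
  have hptw : ∀ x ∈ Icc (0:ℝ) 1,
      -((psiF'' α (St ρ μ t x) * px (St ρ μ) t x) * GS α V W ρ μ t x)
      ≤ -((α/2) * (St ρ μ t x ^ (α-1) * psiF'' α (St ρ μ t x) * px (St ρ μ) t x ^ 2))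
        + (4*K^2/α)*(1 + St ρ μ t x) := by
    intro x _
    have hF : |ρ t x * deriv V x + μ t x * deriv W x| ≤ K * St ρ μ t x := by
      have h1 : |ρ t x * deriv V x| ≤ ρ t x * K := by
        rw [abs_mul, abs_of_pos (sol.pos_rho t x)]
        exact mul_le_mul_of_nonneg_left (db.normV x).2.1 (sol.pos_rho t x).le
      have h2 : |μ t x * deriv W x| ≤ μ t x * K := by
        rw [abs_mul, abs_of_pos (sol.pos_mu t x)]
        exact mul_le_mul_of_nonneg_left (db.normW x).2.1 (sol.pos_mu t x).le
      have h3 := abs_add_le (ρ t x * deriv V x) (μ t x * deriv W x)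
      simp only [St]
      nlinarith [h1, h2, h3]
    have := psi_pointwise (u := px (St ρ μ) t x) hα hα1 (S_pos sol t x) hF
    simp only [GS, Av]
    convert this using 3
  have hint1 : IntervalIntegrable
      (fun x => -((psiF'' α (St ρ μ t x) * px (St ρ μ) t x) * GS α V W ρ μ t x)) volume 0 1 :=
    (((hpsi''c.mul hpxSc).mul hGSc).neg).intervalIntegrable 0 1
  have hint2 : IntervalIntegrable
      (fun x => -((α/2) * (St ρ μ t x ^ (α-1) * psiF'' α (St ρ μ t x) * px (St ρ μ) t x ^ 2))
        + (4*K^2/α)*(1 + St ρ μ t x)) volume 0 1 := by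
    apply IntervalIntegrable.add
    · exact ((continuous_const.mul (((hXrc.mul hpsi''c)).mul (hpxSc.pow 2))).neg).intervalIntegrable 0 1
    · exact (continuous_const.mul (continuous_const.add hSc)).intervalIntegrable 0 1
  have hmono := intervalIntegral.integral_mono_on (by norm_num : (0:ℝ) ≤ 1) hint1 hint2 hptw
  -- compute the RHS integral
  have hsplit : (∫ x in (0:ℝ)..1,
      (-((α/2) * (St ρ μ t x ^ (α-1) * psiF'' α (St ρ μ t x) * px (St ρ μ) t x ^ 2))
        + (4*K^2/α)*(1 + St ρ μ t x)))
      = -((α/2) * ∫ x in (0:ℝ)..1,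
          St ρ μ t x ^ (α-1) * psiF'' α (St ρ μ t x) * px (St ρ μ) t x ^ 2)
        + (4*K^2/α)*(1 + ∫ x in (0:ℝ)..1, St ρ μ t x) := by
    rw [intervalIntegral.integral_add]
    · congr 1
      · rw [intervalIntegral.integral_neg, intervalIntegral.integral_const_mul]
      · rw [intervalIntegral.integral_const_mul]
        congr 1
        rw [intervalIntegral.integral_add intervalIntegrable_const (hSc.intervalIntegrable 0 1)]
        simp
    · exact ((continuous_const.mul (((hXrc.mul hpsi''c)).mul (hpxSc.pow 2))).neg).intervalIntegrable 0 1
    · exact (continuous_const.mul (continuous_const.add hSc)).intervalIntegrable 0 1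
  rw [hsplit] at hmono
  have hmass : (∫ x in (0:ℝ)..1, St ρ μ t x) ≤ M := by
    rw [mass_const sol t ht]
    exact db.mass
  have hc5 : (0:ℝ) ≤ 4*K^2/α := by positivity
  nlinarith [hmono, mul_le_mul_of_nonneg_left hmass hc5]

end Funcs3

end CDaux
namespace CDaux

open Function intervalIntegral

variable {T α M E B K : ℝ} {V W : ℝ → ℝ} {ρ μ : ℝ → ℝ → ℝ}

section Funcs4

variable (sol : CrossDiffSol T α V W ρ μ)
include sol

lemma Bq_cont (hα : 0 < α) :
    Continuous fun t => ∫ x in (0:ℝ)..1, St ρ μ t x ^ (α-2) * px (St ρ μ) t x ^ 2 := by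
  have hc : Continuous fun p : ℝ × ℝ => St ρ μ p.1 p.2 ^ (α-2) * px (St ρ μ) p.1 p.2 ^ 2 :=
    (cont_rpow_comp (S_uc sol) (fun p => S_pos sol p.1 p.2) _).mul ((pxS_uc sol).pow 2)
  exact continuous_parametric_intervalIntegral_of_continuous'
    (f := fun t x => St ρ μ t x ^ (α-2) * px (St ρ μ) t x ^ 2) hc 0 1

lemma P_cont (hα : 0 < α) :
    Continuous fun t => ∫ x in (0:ℝ)..1,
      St ρ μ t x ^ (α-1) * psiF'' α (St ρ μ t x) * px (St ρ μ) t x ^ 2 := by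
  have hc : Continuous fun p : ℝ × ℝ =>
      St ρ μ p.1 p.2 ^ (α-1) * psiF'' α (St ρ μ p.1 p.2) * px (St ρ μ) p.1 p.2 ^ 2 :=
    ((cont_rpow_comp (S_uc sol) (fun p => S_pos sol p.1 p.2) _).mul
      (psiS''_uc sol hα)).mul ((pxS_uc sol).pow 2)
  exact continuous_parametric_intervalIntegral_of_continuous'
    (f := fun t x => St ρ μ t x ^ (α-1) * psiF'' α (St ρ μ t x) * px (St ρ μ) t x ^ 2) hc 0 1

lemma target_cont :
    Continuous fun t => ∫ x in (0:ℝ)..1, (px (St ρ μ) t x / St ρ μ t x) ^ 2 := by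
  have hc : Continuous fun p : ℝ × ℝ => (px (St ρ μ) p.1 p.2 / St ρ μ p.1 p.2) ^ 2 :=
    ((pxS_uc sol).div (S_uc sol) (fun p => ne_of_gt (S_pos sol p.1 p.2))).pow 2
  exact continuous_parametric_intervalIntegral_of_continuous'
    (f := fun t x => (px (St ρ μ) t x / St ρ μ t x) ^ 2) hc 0 1

lemma boltz0_le (db : DataBounds V W ρ μ M E B K) :
    (∫ x in (0:ℝ)..1, (ρ 0 x * Real.log (ρ 0 x) + μ 0 x * Real.log (μ 0 x))) ≤ E := by
  refine le_trans ?_ db.entropy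
  have hρc : Continuous (ρ 0) :=
    (contDiff_sect (sol.smooth_rho.of_le (by exact_mod_cast le_top : (1:WithTop ℕ∞) ≤ ((⊤ : ℕ∞) : WithTop ℕ∞))) 0).continuous
  have hμc : Continuous (μ 0) :=
    (contDiff_sect (sol.smooth_mu.of_le (by exact_mod_cast le_top : (1:WithTop ℕ∞) ≤ ((⊤ : ℕ∞) : WithTop ℕ∞))) 0).continuous
  have hρl : Continuous fun x => Real.log (ρ 0 x) :=
    hρc.log fun x => ne_of_gt (sol.pos_rho 0 x)
  have hμl : Continuous fun x => Real.log (μ 0 x) :=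
    hμc.log fun x => ne_of_gt (sol.pos_mu 0 x)
  apply intervalIntegral.integral_mono_on (by norm_num : (0:ℝ) ≤ 1)
  · exact ((hρc.mul hρl).add (hμc.mul hμl)).intervalIntegrable 0 1
  · exact ((hρc.mul hρl.abs).add (hμc.mul hμl.abs)).intervalIntegrable 0 1
  · intro x _
    have h1 := mul_le_mul_of_nonneg_left (le_abs_self (Real.log (ρ 0 x))) (sol.pos_rho 0 x).le
    have h2 := mul_le_mul_of_nonneg_left (le_abs_self (Real.log (μ 0 x))) (sol.pos_mu 0 x).le
    exact add_le_add h1 h2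

lemma boltzT_ge (hT0 : 0 ≤ T) :
    (-2:ℝ) ≤ ∫ x in (0:ℝ)..1, (ρ T x * Real.log (ρ T x) + μ T x * Real.log (μ T x)) := by
  have hρc : Continuous (ρ T) :=
    (contDiff_sect (sol.smooth_rho.of_le (by exact_mod_cast le_top : (1:WithTop ℕ∞) ≤ ((⊤ : ℕ∞) : WithTop ℕ∞))) T).continuous
  have hμc : Continuous (μ T) :=
    (contDiff_sect (sol.smooth_mu.of_le (by exact_mod_cast le_top : (1:WithTop ℕ∞) ≤ ((⊤ : ℕ∞) : WithTop ℕ∞))) T).continuous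
  have hSc : Continuous (St ρ μ T) := hρc.add hμc
  have hρl : Continuous fun x => Real.log (ρ T x) :=
    hρc.log fun x => ne_of_gt (sol.pos_rho T x)
  have hμl : Continuous fun x => Real.log (μ T x) :=
    hμc.log fun x => ne_of_gt (sol.pos_mu T x)
  have hmono : (∫ x in (0:ℝ)..1, (St ρ μ T x - 2))
      ≤ ∫ x in (0:ℝ)..1, (ρ T x * Real.log (ρ T x) + μ T x * Real.log (μ T x)) := by
    apply intervalIntegral.integral_mono_on (by norm_num : (0:ℝ) ≤ 1)
    · exact (hSc.sub continuous_const).intervalIntegrable 0 1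
    · exact ((hρc.mul hρl).add (hμc.mul hμl)).intervalIntegrable 0 1
    · intro x _
      have h1 := mul_log_ge (sol.pos_rho T x)
      have h2 := mul_log_ge (sol.pos_mu T x)
      simp only [St]
      linarith
  have hval : (∫ x in (0:ℝ)..1, (St ρ μ T x - 2))
      = (∫ x in (0:ℝ)..1, St ρ μ T x) - 2 := by
    rw [intervalIntegral.integral_sub (hSc.intervalIntegrable 0 1) intervalIntegrable_const]
    simp
  have hm : (∫ x in (0:ℝ)..1, St ρ μ T x) = ∫ x in (0:ℝ)..1, St ρ μ 0 x :=
    mass_const sol T ⟨hT0, le_refl T⟩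
  have hm0 : (0:ℝ) ≤ ∫ x in (0:ℝ)..1, St ρ μ 0 x :=
    intervalIntegral.integral_nonneg (by norm_num) (fun x _ => (S_pos sol 0 x).le)
  linarith [hmono, hval, hm, hm0]

lemma boltz_final (hα : 0 < α) (hT : 0 < T) (db : DataBounds V W ρ μ M E B K) :
    (∫ t in (0:ℝ)..T, ∫ x in (0:ℝ)..1, St ρ μ t x ^ (α-2) * px (St ρ μ) t x ^ 2)
      ≤ (E + 2 + K*M*T)/α := by
  have hkey := key_integrate (T := T) (c := K*M)
    (D := fun t => α * ∫ x in (0:ℝ)..1, St ρ μ t x ^ (α-2) * px (St ρ μ) t x ^ 2)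
    hT (boltz_hasDeriv sol) (continuous_const.mul (Bq_cont sol hα))
    (fun t ht => boltz_deriv_bound sol hα db t ht)
  rw [intervalIntegral.integral_const_mul] at hkey
  have h0 := boltz0_le sol db
  have hT2 := boltzT_ge sol hT.le
  rw [le_div_iff₀ hα]
  have hflip : (∫ t in (0:ℝ)..T, ∫ x in (0:ℝ)..1,
      St ρ μ t x ^ (α-2) * px (St ρ μ) t x ^ 2) * α
      = α * ∫ t in (0:ℝ)..T, ∫ x in (0:ℝ)..1,
        St ρ μ t x ^ (α-2) * px (St ρ μ) t x ^ 2 := mul_comm _ _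
  linarith [hkey, hflip.le, hflip.ge]

lemma psi0_le (hα : 0 < α) (hα1 : α < 1) (db : DataBounds V W ρ μ M E B K) :
    (∫ x in (0:ℝ)..1, psiF α (St ρ μ 0 x)) ≤ 17/(α*(1-α)) * (1+M) := by
  have hSc : Continuous (St ρ μ 0) :=
    (contDiff_sect ((S_smooth sol).of_le (by exact_mod_cast le_top : (1:WithTop ℕ∞) ≤ ((⊤ : ℕ∞) : WithTop ℕ∞))) 0).continuous
  have hpsic : Continuous fun x => psiF α (St ρ μ 0 x) :=
    (psiS_uc sol hα).comp (Continuous.prodMk_right 0)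
  have hc6 : (0:ℝ) ≤ 17/(α*(1-α)) := by
    have h1 : (0:ℝ) < α*(1-α) := by nlinarith
    positivity
  have hmono : (∫ x in (0:ℝ)..1, psiF α (St ρ μ 0 x))
      ≤ ∫ x in (0:ℝ)..1, 17/(α*(1-α)) * (1 + St ρ μ 0 x) := by
    apply intervalIntegral.integral_mono_on (by norm_num : (0:ℝ) ≤ 1)
    · exact hpsic.intervalIntegrable 0 1
    · exact (continuous_const.mul (continuous_const.add hSc)).intervalIntegrable 0 1
    · intro x _
      exact le_trans (le_abs_self _) (psiF_abs hα hα1 (S_pos sol 0 x))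
  have hval : (∫ x in (0:ℝ)..1, 17/(α*(1-α)) * (1 + St ρ μ 0 x))
      = 17/(α*(1-α)) * (1 + ∫ x in (0:ℝ)..1, St ρ μ 0 x) := by
    rw [intervalIntegral.integral_const_mul]
    congr 1
    rw [intervalIntegral.integral_add intervalIntegrable_const (hSc.intervalIntegrable 0 1)]
    simp
  have hm : (∫ x in (0:ℝ)..1, St ρ μ 0 x) ≤ M := db.mass
  calc (∫ x in (0:ℝ)..1, psiF α (St ρ μ 0 x))
      ≤ 17/(α*(1-α)) * (1 + ∫ x in (0:ℝ)..1, St ρ μ 0 x) := by rw [← hval]; exact hmono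
    _ ≤ 17/(α*(1-α)) * (1+M) := by
        apply mul_le_mul_of_nonneg_left _ hc6
        linarith
  
lemma psiT_ge (hα : 0 < α) (hα1 : α < 1) (hT0 : 0 ≤ T) (db : DataBounds V W ρ μ M E B K) :
    -(17/(α*(1-α)) * (1+M)) ≤ ∫ x in (0:ℝ)..1, psiF α (St ρ μ T x) := by
  have hSc : Continuous (St ρ μ T) :=
    (contDiff_sect ((S_smooth sol).of_le (by exact_mod_cast le_top : (1:WithTop ℕ∞) ≤ ((⊤ : ℕ∞) : WithTop ℕ∞))) T).continuous
  have hpsic : Continuous fun x => psiF α (St ρ μ T x) :=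
    (psiS_uc sol hα).comp (Continuous.prodMk_right T)
  have hc6 : (0:ℝ) ≤ 17/(α*(1-α)) := by
    have h1 : (0:ℝ) < α*(1-α) := by nlinarith
    positivity
  have hmono : (∫ x in (0:ℝ)..1, -(17/(α*(1-α)) * (1 + St ρ μ T x)))
      ≤ ∫ x in (0:ℝ)..1, psiF α (St ρ μ T x) := by
    apply intervalIntegral.integral_mono_on (by norm_num : (0:ℝ) ≤ 1)
    · exact (continuous_const.mul (continuous_const.add hSc)).neg.intervalIntegrable 0 1
    · exact hpsic.intervalIntegrable 0 1
    · intro x _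
      have habs := psiF_abs hα hα1 (S_pos sol T x)
      have h1 : -(17/(α*(1-α)) * (1 + St ρ μ T x)) ≤ -|psiF α (St ρ μ T x)| := by
        exact neg_le_neg habs
      linarith [neg_abs_le (psiF α (St ρ μ T x))]
  have hval : (∫ x in (0:ℝ)..1, -(17/(α*(1-α)) * (1 + St ρ μ T x)))
      = -(17/(α*(1-α)) * (1 + ∫ x in (0:ℝ)..1, St ρ μ T x)) := by
    rw [intervalIntegral.integral_neg]
    congr 1
    rw [intervalIntegral.integral_const_mul]
    congr 1
    rw [intervalIntegral.integral_add intervalIntegrable_const (hSc.intervalIntegrable 0 1)]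
    simp
  have hm : (∫ x in (0:ℝ)..1, St ρ μ T x) = ∫ x in (0:ℝ)..1, St ρ μ 0 x :=
    mass_const sol T ⟨hT0, le_refl T⟩
  have hm2 : (∫ x in (0:ℝ)..1, St ρ μ 0 x) ≤ M := db.mass
  have hstep : -(17/(α*(1-α)) * (1+M))
      ≤ -(17/(α*(1-α)) * (1 + ∫ x in (0:ℝ)..1, St ρ μ T x)) := by
    apply neg_le_neg
    apply mul_le_mul_of_nonneg_left _ hc6
    linarith
  linarith [hmono, hval.ge, hval.le, hstep]

lemma psi_final (hα : 0 < α) (hα1 : α < 1) (hT : 0 < T)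
    (db : DataBounds V W ρ μ M E B K) :
    (∫ t in (0:ℝ)..T, ∫ x in (0:ℝ)..1,
        St ρ μ t x ^ (α-1) * psiF'' α (St ρ μ t x) * px (St ρ μ) t x ^ 2)
      ≤ (2/α) * (2*(17/(α*(1-α)))*(1+M) + (4*K^2/α)*(1+M)*T) := by
  have hkey := key_integrate (T := T) (c := (4*K^2/α)*(1+M))
    (D := fun t => (α/2) * ∫ x in (0:ℝ)..1,
      St ρ μ t x ^ (α-1) * psiF'' α (St ρ μ t x) * px (St ρ μ) t x ^ 2)
    hT (psi_hasDeriv_t sol hα hα1) (continuous_const.mul (P_cont sol hα))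
    (fun t ht => psi_deriv_bound sol hα hα1 db t ht)
  rw [intervalIntegral.integral_const_mul] at hkey
  have h0 := psi0_le sol hα hα1 db
  have hT2 := psiT_ge sol hα hα1 hT.le db
  have hstep : (α/2) * (∫ t in (0:ℝ)..T, ∫ x in (0:ℝ)..1,
      St ρ μ t x ^ (α-1) * psiF'' α (St ρ μ t x) * px (St ρ μ) t x ^ 2)
      ≤ 2*(17/(α*(1-α)))*(1+M) + (4*K^2/α)*(1+M)*T := by linarith
  have h2α : (0:ℝ) ≤ 2/α := by positivity
  have hfin := mul_le_mul_of_nonneg_left hstep h2α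
  have hid : (2/α)*((α/2) * (∫ t in (0:ℝ)..T, ∫ x in (0:ℝ)..1,
      St ρ μ t x ^ (α-1) * psiF'' α (St ρ μ t x) * px (St ρ μ) t x ^ 2))
      = ∫ t in (0:ℝ)..T, ∫ x in (0:ℝ)..1,
        St ρ μ t x ^ (α-1) * psiF'' α (St ρ μ t x) * px (St ρ μ) t x ^ 2 := by
    field_simp
  linarith [hfin, hid.le, hid.ge]

end Funcs4

end CDaux
open CDaux Function intervalIntegral in
/-- A priori estimate: for `0 < α < 1`, `∂ₓ log S ∈ L²((0,T)×𝕋)`,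
with a constant depending only on `T, α, M, E, K`. -/
theorem estimate_log_S (T α M E K : ℝ) (hT : 0 < T) (hα : 0 < α) (hα1 : α < 1)
    (hM : 0 < M) (hE : 0 < E) (hK : 0 < K) :
    ∃ C : ℝ, ∀ (B : ℝ) (V W : ℝ → ℝ) (ρ μ : ℝ → ℝ → ℝ), 0 < B →
      CrossDiffSol T α V W ρ μ → DataBounds V W ρ μ M E B K →
      (∫ t in (0:ℝ)..T, ∫ x in (0:ℝ)..1,
          (deriv (fun y => Real.log (ρ t y + μ t y)) x) ^ 2) ≤ C := by
  refine ⟨(E + 2 + K*M*T)/α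
      + 2 * ((2/α) * (2*(17/(α*(1-α)))*(1+M) + (4*K^2/α)*(1+M)*T)), ?_⟩
  intro B V W ρ μ hB sol db
  have key1 := boltz_final sol hα hT db
  have key2 := psi_final sol hα hα1 hT db
  have hSd : Differentiable ℝ (uncurry (St ρ μ)) := (S_smooth sol).differentiable (by simp)
  -- rewrite the inner integrand as (pxS/S)^2
  have hrw : ∀ t, (∫ x in (0:ℝ)..1, (deriv (fun y => Real.log (ρ t y + μ t y)) x) ^ 2)
      = ∫ x in (0:ℝ)..1, (px (St ρ μ) t x / St ρ μ t x) ^ 2 := by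
    intro t
    apply intervalIntegral.integral_congr
    intro x _
    dsimp only
    have hld : deriv (fun y => Real.log (ρ t y + μ t y)) x
        = px (St ρ μ) t x / St ρ μ t x :=
      ((hasDerivAt_px hSd t x).log (ne_of_gt (S_pos sol t x))).deriv
    rw [hld]
  -- inner comparison
  have hinner : ∀ t, (∫ x in (0:ℝ)..1, (px (St ρ μ) t x / St ρ μ t x) ^ 2)
      ≤ (∫ x in (0:ℝ)..1, St ρ μ t x ^ (α-2) * px (St ρ μ) t x ^ 2)
        + 2 * ∫ x in (0:ℝ)..1,
            St ρ μ t x ^ (α-1) * psiF'' α (St ρ μ t x) * px (St ρ μ) t x ^ 2 := by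
    intro t
    have hSc : Continuous (St ρ μ t) :=
      (contDiff_sect ((S_smooth sol).of_le (by exact_mod_cast le_top : (1:WithTop ℕ∞) ≤ ((⊤ : ℕ∞) : WithTop ℕ∞))) t).continuous
    have hpxSc : Continuous (px (St ρ μ) t) :=
      (contDiff_sect (pxS_smooth (n := 1) sol) t).continuous
    have hpsi''c : Continuous fun x => psiF'' α (St ρ μ t x) :=
      (psiS''_uc sol hα).comp (Continuous.prodMk_right t)
    have hbc : Continuous fun x => St ρ μ t x ^ (α-2) * px (St ρ μ) t x ^ 2 :=
      (cont_rpow_comp hSc (S_pos sol t) _).mul (hpxSc.pow 2)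
    have hpc : Continuous fun x =>
        St ρ μ t x ^ (α-1) * psiF'' α (St ρ μ t x) * px (St ρ μ) t x ^ 2 :=
      ((cont_rpow_comp hSc (S_pos sol t) _).mul hpsi''c).mul (hpxSc.pow 2)
    have hmono : (∫ x in (0:ℝ)..1, (px (St ρ μ) t x / St ρ μ t x) ^ 2)
        ≤ ∫ x in (0:ℝ)..1, (St ρ μ t x ^ (α-2) * px (St ρ μ) t x ^ 2
            + 2 * (St ρ μ t x ^ (α-1) * psiF'' α (St ρ μ t x) * px (St ρ μ) t x ^ 2)) := by
      apply intervalIntegral.integral_mono_on (by norm_num : (0:ℝ) ≤ 1)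
      · exact ((hpxSc.div hSc fun x => ne_of_gt (S_pos sol t x)).pow 2).intervalIntegrable 0 1
      · exact (hbc.add (continuous_const.mul hpc)).intervalIntegrable 0 1
      · intro x _
        have := final_pointwise (u := px (St ρ μ) t x) hα hα1 (S_pos sol t x)
        linarith [this]
    have hsplit : (∫ x in (0:ℝ)..1, (St ρ μ t x ^ (α-2) * px (St ρ μ) t x ^ 2
        + 2 * (St ρ μ t x ^ (α-1) * psiF'' α (St ρ μ t x) * px (St ρ μ) t x ^ 2)))
        = (∫ x in (0:ℝ)..1, St ρ μ t x ^ (α-2) * px (St ρ μ) t x ^ 2)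
          + 2 * ∫ x in (0:ℝ)..1,
              St ρ μ t x ^ (α-1) * psiF'' α (St ρ μ t x) * px (St ρ μ) t x ^ 2 := by
      rw [intervalIntegral.integral_add (f := fun x => St ρ μ t x ^ (α-2) * px (St ρ μ) t x ^ 2)
        (g := fun x => 2 * (St ρ μ t x ^ (α-1) * psiF'' α (St ρ μ t x) * px (St ρ μ) t x ^ 2))
        (hbc.intervalIntegrable 0 1)
        ((continuous_const.mul hpc).intervalIntegrable 0 1),
        intervalIntegral.integral_const_mul]
    linarith [hmono, hsplit.le, hsplit.ge]
  -- outer comparison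
  have houter : (∫ t in (0:ℝ)..T, ∫ x in (0:ℝ)..1,
      (deriv (fun y => Real.log (ρ t y + μ t y)) x) ^ 2)
      = ∫ t in (0:ℝ)..T, ∫ x in (0:ℝ)..1, (px (St ρ μ) t x / St ρ μ t x) ^ 2 := by
    apply intervalIntegral.integral_congr
    intro t _
    exact hrw t
  rw [houter]
  have hI2 : IntervalIntegrable (fun t =>
      (∫ x in (0:ℝ)..1, St ρ μ t x ^ (α-2) * px (St ρ μ) t x ^ 2)
        + 2 * ∫ x in (0:ℝ)..1,
            St ρ μ t x ^ (α-1) * psiF'' α (St ρ μ t x) * px (St ρ μ) t x ^ 2) volume 0 T :=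
    ((Bq_cont sol hα).add (continuous_const.mul (P_cont sol hα))).intervalIntegrable 0 T
  have hbig : (∫ t in (0:ℝ)..T, ∫ x in (0:ℝ)..1, (px (St ρ μ) t x / St ρ μ t x) ^ 2)
      ≤ ∫ t in (0:ℝ)..T,
          ((∫ x in (0:ℝ)..1, St ρ μ t x ^ (α-2) * px (St ρ μ) t x ^ 2)
            + 2 * ∫ x in (0:ℝ)..1,
                St ρ μ t x ^ (α-1) * psiF'' α (St ρ μ t x) * px (St ρ μ) t x ^ 2) := by
    apply intervalIntegral.integral_mono_on hT.le
    · exact (target_cont sol).intervalIntegrable 0 T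
    · exact hI2
    · intro t _
      exact hinner t
  have hsplit2 : (∫ t in (0:ℝ)..T,
      ((∫ x in (0:ℝ)..1, St ρ μ t x ^ (α-2) * px (St ρ μ) t x ^ 2)
        + 2 * ∫ x in (0:ℝ)..1,
            St ρ μ t x ^ (α-1) * psiF'' α (St ρ μ t x) * px (St ρ μ) t x ^ 2))
      = (∫ t in (0:ℝ)..T, ∫ x in (0:ℝ)..1, St ρ μ t x ^ (α-2) * px (St ρ μ) t x ^ 2)
        + 2 * ∫ t in (0:ℝ)..T, ∫ x in (0:ℝ)..1,
            St ρ μ t x ^ (α-1) * psiF'' α (St ρ μ t x) * px (St ρ μ) t x ^ 2 := by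
    rw [intervalIntegral.integral_add
      (f := fun t => ∫ x in (0:ℝ)..1, St ρ μ t x ^ (α-2) * px (St ρ μ) t x ^ 2)
      (g := fun t => 2 * ∫ x in (0:ℝ)..1,
        St ρ μ t x ^ (α-1) * psiF'' α (St ρ μ t x) * px (St ρ μ) t x ^ 2)
      ((Bq_cont sol hα).intervalIntegrable 0 T)
      ((continuous_const.mul (P_cont sol hα)).intervalIntegrable 0 T),
      intervalIntegral.integral_const_mul]
  linarith [hbig, hsplit2.le, hsplit2.ge, key1, key2]
end
end
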